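/- arXiv:1208.2346 — 10 statements merged into one kernel-verified Lean document; each statement's English description precedes it below -/
import Mathlib

section
/- Let r = 2^m and s = 2^n with r + 1 dividing s + 1. Then for every c ∈ F_{r^2}, the polynomial G(c,y) = y^{s+1} + c y^s + c^r y + 1 has a root y ∈ μ_{r+1}. (If c = 0 take y = 1; if c ≠ 0 take y = c^{(r/2)(r-1)}.) -/
/-- If `r + 1` divides `s + 1` then for every `c ∈ F_{r^2}` the polynomial
`G(c,y) = y^{s+1} + c y^s + c^r y + 1` has a root `y ∈ μ_{r+1}`. -/
theorem stmt4 (m n : ℕ) (hm : 1 ≤ m) (hn : 1 ≤ n)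
    (hdvd : (2 ^ m + 1) ∣ (2 ^ n + 1))
    (K : Type) [Field K] [Fintype K] (hcard : Fintype.card K = 2 ^ (2 * m)) (c : K) :
    ∃ y : K, y ^ (2 ^ m + 1) = 1 ∧
      y ^ (2 ^ n + 1) + c * y ^ (2 ^ n) + c ^ (2 ^ m) * y + 1 = 0 := by
  have h2 : (2 : K) = 0 := by
    have h := FiniteField.cast_card_eq_zero K
    rw [hcard] at h
    push_cast at h
    exact pow_eq_zero_iff (by omega) |>.mp h
  by_cases hc : c = 0
  · refine ⟨1, one_pow _, ?_⟩
    simp only [hc, one_pow, zero_mul, zero_pow (by positivity : (2:ℕ)^m ≠ 0), mul_one, zero_add,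
      add_zero]
    linear_combination h2
  · obtain ⟨k, hk⟩ := hdvd
    have hx : 1 ≤ 2 ^ m := Nat.one_le_two_pow
    have h2m : 2 ^ (2 * m) = 2 ^ m * 2 ^ m := by rw [two_mul, pow_add]
    have hpm : 2 ^ (m - 1) * 2 = 2 ^ m := by
      rw [← pow_succ, Nat.sub_add_cancel hm]
    set y := c ^ ((2 ^ m - 1) * 2 ^ (m - 1)) with hy
    have hq : c ^ (2 ^ (2 * m) - 1) = 1 := by
      have := FiniteField.pow_card_sub_one_eq_one c hc
      rwa [hcard] at this
    have hcc : c ^ (2 ^ (2 * m)) = c := by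
      have := FiniteField.pow_card c
      rwa [hcard] at this
    have key : (2 ^ m - 1) * 2 ^ (m - 1) * (2 ^ m + 1) = (2 ^ (2 * m) - 1) * 2 ^ (m - 1) := by
      rw [mul_right_comm]
      congr 1
      rw [Nat.sub_one_mul, h2m]
      have h1 : 2 ^ m * (2 ^ m + 1) = 2 ^ m * 2 ^ m + 2 ^ m := by ring
      have h2' : 2 ^ m ≤ 2 ^ m * 2 ^ m := Nat.le_mul_of_pos_left _ (by positivity)
      omega
    have hy1 : y ^ (2 ^ m + 1) = 1 := by
      rw [hy, ← pow_mul, key, pow_mul, hq, one_pow]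
    have hyne : y ≠ 0 := pow_ne_zero _ hc
    have hy2 : c ^ (2 ^ m) * y ^ 2 = c := by
      rw [hy, ← pow_mul, ← pow_add]
      have e : 2 ^ m + (2 ^ m - 1) * 2 ^ (m - 1) * 2 = 2 ^ (2 * m) := by
        rw [mul_assoc, hpm, Nat.sub_one_mul, h2m]
        have h2' : 2 ^ m ≤ 2 ^ m * 2 ^ m := Nat.le_mul_of_pos_left _ (by positivity)
        omega
      rw [e, hcc]
    have hys1 : y ^ (2 ^ n + 1) = 1 := by
      rw [hk, pow_mul, hy1, one_pow]
    refine ⟨y, hy1, ?_⟩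
    have hmul : y * (y ^ (2 ^ n + 1) + c * y ^ (2 ^ n) + c ^ (2 ^ m) * y + 1) = 0 := by
      have expand : y * (y ^ (2 ^ n + 1) + c * y ^ (2 ^ n) + c ^ (2 ^ m) * y + 1)
          = y * y ^ (2 ^ n + 1) + c * (y ^ (2 ^ n) * y) + c ^ (2 ^ m) * y ^ 2 + y := by
        ring
      rw [expand, ← pow_succ, hys1, hy2]
      linear_combination (y + c) * h2
    exact (mul_eq_zero.mp hmul).resolve_left hyne
end

section
/- Let r = 2^m, s = 2^n, and let y ∈ μ_{r+1} with y^{s-1} ≠ 1. Define c_0 = (y^{s+1} + 1)/(y^s + y). Then c_0 ∈ F_r (i.e., c_0^r = c_0) and G(c_0, y) = y^{s+1} + c_0 y^s + c_0^r y + 1 = 0. -/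
/-!
Since `y ^ (r + 1) = 1`, the Frobenius power `x ↦ x ^ r` sends `y` to `y⁻¹`, hence maps
`(y ^ (a + 1) + 1) / (y ^ a + y)` to the same fraction with numerator and denominator divided by
`y ^ (a + 1)`. In characteristic 2, `G(c₀, y) = (y ^ (s + 1) + 1) + c₀ (y ^ s + y)` is twice
`y ^ (s + 1) + 1`, and the denominator `y ^ s + y = y (y ^ (s - 1) + 1)` does not vanish.
-/

theorem div_pow_expChar_pow_eq_self {K : Type*} [Field K] (p : ℕ) [ExpChar K p] (m a : ℕ) {y : K}
    (hy : y ^ (p ^ m + 1) = 1) :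
    ((y ^ (a + 1) + 1) / (y ^ a + y)) ^ p ^ m = (y ^ (a + 1) + 1) / (y ^ a + y) := by
  have hy0 : y ≠ 0 := by rintro rfl; simp at hy
  have hyq : iterateFrobenius K p m y = y⁻¹ :=
    eq_inv_of_mul_eq_one_left ((pow_succ y _).symm.trans hy)
  rw [← iterateFrobenius_def, map_div₀, map_add, map_add, map_one, map_pow, map_pow, hyq,
    ← mul_div_mul_left _ _ (pow_ne_zero (a + 1) hy0)]
  congr 1 <;> simp only [inv_pow] <;> field_simp <;> ring

theorem CharTwo.pow_add_self_ne_zero {K : Type*} [Field K] [CharP K 2] {y : K} {a : ℕ}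
    (ha : a ≠ 0) (hy0 : y ≠ 0) (hy : y ^ (a - 1) ≠ 1) : y ^ a + y ≠ 0 := by
  obtain ⟨b, rfl⟩ := Nat.exists_eq_succ_of_ne_zero ha
  rw [Nat.succ_sub_one] at hy
  rw [pow_succ', ← mul_add_one]
  exact mul_ne_zero hy0 (mt CharTwo.add_eq_zero.mp hy)

theorem stmt7_general (m n : ℕ)
    (K : Type) [Field K] [Fintype K] (hcard : Fintype.card K = 2 ^ (2 * m))
    (y : K) (hy : y ^ (2 ^ m + 1) = 1) (hy' : y ^ (2 ^ n - 1) ≠ 1) :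
    let c₀ : K := (y ^ (2 ^ n + 1) + 1) / (y ^ (2 ^ n) + y)
    c₀ ^ (2 ^ m) = c₀ ∧
      y ^ (2 ^ n + 1) + c₀ * y ^ (2 ^ n) + c₀ ^ (2 ^ m) * y + 1 = 0 := by
  intro c₀
  have : Fact (Nat.Prime 2) := ⟨Nat.prime_two⟩
  have : CharP K 2 := charP_of_card_eq_prime_pow hcard
  have hc₀ : c₀ ^ 2 ^ m = c₀ := div_pow_expChar_pow_eq_self 2 m (2 ^ n) hy
  have hd : y ^ 2 ^ n + y ≠ 0 :=
    CharTwo.pow_add_self_ne_zero (by positivity) (by rintro rfl; simp at hy) hy'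
  have hc₀_mul : c₀ * (y ^ 2 ^ n + y) = y ^ (2 ^ n + 1) + 1 := div_mul_cancel₀ _ hd
  refine ⟨hc₀, ?_⟩
  calc _ = y ^ (2 ^ n + 1) + 1 + c₀ * (y ^ 2 ^ n + y) := by rw [hc₀]; ring
    _ = 0 := by rw [hc₀_mul, CharTwo.add_self_eq_zero]

/-- For `y ∈ μ_{r+1}` with `y^{s-1} ≠ 1`, the element `c₀ = (y^{s+1}+1)/(y^s+y)`
lies in `F_r` and is a root of `G(c,y)`. -/
theorem stmt7 (m n : ℕ) (hm : 1 ≤ m) (hn : 1 ≤ n)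
    (K : Type) [Field K] [Fintype K] (hcard : Fintype.card K = 2 ^ (2 * m))
    (y : K) (hy : y ^ (2 ^ m + 1) = 1) (hy' : y ^ (2 ^ n - 1) ≠ 1) :
    let c₀ : K := (y ^ (2 ^ n + 1) + 1) / (y ^ (2 ^ n) + y)
    c₀ ^ (2 ^ m) = c₀ ∧
      y ^ (2 ^ n + 1) + c₀ * y ^ (2 ^ n) + c₀ ^ (2 ^ m) * y + 1 = 0 :=
  stmt7_general m n K hcard y hy hy'
end

section
/- Let r = 2^m with m > 1 and s = 2^n, and suppose r + 1 divides s - 1. Then there exists c ∈ F_{r^2} such that G(c,y) = y^{s+1} + c y^s + c^r y + 1 has no root y in μ_{r+1}. -/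
/-!
For `y ∈ μ_{r+1}` the hypothesis `r + 1 ∣ s - 1` gives `y ^ s = y`, so in characteristic 2
`G(c, y) = y ^ 2 + (c + c ^ r) y + 1` vanishes exactly when `c + c ^ r = y + y⁻¹`.
The fibres of `c ↦ c + c ^ r` are root sets of a polynomial of degree `r`, so on a field of
`r ^ 2` elements it takes at least `r` values, whereas `y ↦ y + y⁻¹` is invariant under
`y ↦ y⁻¹`, which has no fixed point off its zero fibre, so on `μ_{r+1}` it takes at most
`(r + 3) / 2 < r` values. Any `c` whose value `c + c ^ r` is missed works.
-/

open Polynomial Finset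

theorem Finset.two_mul_card_image_le_card_add_two {α β : Type*} [DecidableEq β]
    {s : Finset α} (f : α → β) (g : α → α) (b₀ : β) (hg : ∀ a ∈ s, g a ∈ s)
    (hfg : ∀ a ∈ s, f (g a) = f a) (hfix : ∀ a ∈ s, f a ≠ b₀ → g a ≠ a) :
    2 * #(s.image f) ≤ #s + 2 := by
  set s' := s.filter (f · ≠ b₀)
  have hfibre : ∀ b ∈ s'.image f, 2 ≤ #{a ∈ s' | f a = b} := by
    intro b hb
    obtain ⟨a, ha, rfl⟩ := mem_image.mp hb
    obtain ⟨has, hab₀⟩ := mem_filter.mp ha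
    refine one_lt_card.mpr ⟨a, ?_, g a, ?_, (hfix a has hab₀).symm⟩
    · simp [s', has, hab₀]
    · simp [s', hg a has, hfg a has, hab₀]
  have hs' : 2 * #(s'.image f) ≤ #s' :=
    mul_card_image_le_card_of_maps_to (fun a ha => mem_image_of_mem f ha) 2 hfibre
  have himage : s.image f ⊆ insert b₀ (s'.image f) := by
    intro b hb
    obtain ⟨a, ha, rfl⟩ := mem_image.mp hb
    by_cases hab₀ : f a = b₀
    · simp [hab₀]
    · exact mem_insert_of_mem (mem_image_of_mem f (mem_filter.mpr ⟨ha, hab₀⟩))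
  have hs's : #s' ≤ #s := card_filter_le _ _
  have := (card_le_card himage).trans (card_insert_le _ _)
  omega

theorem Polynomial.card_nthRootsFinset_le {R : Type*} [CommRing R] [IsDomain R] (n : ℕ) (a : R) :
    #(nthRootsFinset n a) ≤ n := by
  classical
  rw [nthRootsFinset_def]
  exact (Multiset.toFinset_card_le _).trans (card_nthRoots n a)

theorem Polynomial.inv_mem_nthRootsFinset_one {K : Type*} [Field K] {n : ℕ} {y : K}
    (hy : y ∈ nthRootsFinset n (1 : K)) : y⁻¹ ∈ nthRootsFinset n (1 : K) := by
  rcases n.eq_zero_or_pos with rfl | hn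
  · simp at hy
  · rw [mem_nthRootsFinset hn] at hy ⊢
    rw [inv_pow, hy, inv_one]

section

variable {K : Type*} [Field K] [DecidableEq K]

theorem card_filter_add_pow_eq_le [Fintype K] {q : ℕ} (hq : 1 < q) (b : K) :
    #{a : K | a + a ^ q = b} ≤ q := by
  set p : K[X] := X ^ q + (X - C b)
  have hmonic : p.Monic := monic_X_pow_add (by rw [degree_X_sub_C]; exact_mod_cast hq)
  have hdeg : p.natDegree = q := by
    rw [natDegree_add_eq_left_of_degree_lt, natDegree_X_pow]
    rw [degree_X_pow, degree_X_sub_C]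
    exact_mod_cast hq
  refine (card_le_degree_of_subset_roots fun a ha => ?_).trans hdeg.le
  rw [mem_roots hmonic.ne_zero, IsRoot.def]
  have ha : a + a ^ q = b := by simpa using ha
  simp only [p, eval_add, eval_pow, eval_X, eval_sub, eval_C]
  linear_combination ha

theorem card_le_mul_card_image_add_pow [Fintype K] {q : ℕ} (hq : 1 < q) :
    Fintype.card K ≤ q * #(univ.image fun c : K => c + c ^ q) :=
  card_le_mul_card_image _ q fun b _ => card_filter_add_pow_eq_le hq b

theorem two_mul_card_image_add_inv_nthRootsFinset_le [CharP K 2] (n : ℕ) :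
    2 * #((nthRootsFinset n (1 : K)).image fun y => y + y⁻¹) ≤ n + 2 := by
  refine (two_mul_card_image_le_card_add_two _ (·⁻¹) 0 (fun y => inv_mem_nthRootsFinset_one)
    (fun y _ => by simp [add_comm]) (fun y _ hy hyy => hy ?_)).trans
    (by have := card_nthRootsFinset_le n (1 : K); omega)
  rw [hyy, CharTwo.add_self_eq_zero]

end

theorem eq_add_inv_of_sq_add_mul_add_one_eq_zero {K : Type*} [Field K] [CharP K 2] {y t : K}
    (hy : y ≠ 0) (h : y ^ 2 + t * y + 1 = 0) : t = y + y⁻¹ := by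
  refine mul_right_cancel₀ hy ?_
  rw [add_mul, inv_mul_cancel₀ hy]
  linear_combination h - CharTwo.add_self_eq_zero (y ^ 2 + 1)

theorem stmt10_general (m n : ℕ) (hm : 1 < m)
    (hdvd : (2 ^ m + 1) ∣ (2 ^ n - 1))
    (K : Type) [Field K] [Fintype K] (hcard : Fintype.card K = 2 ^ (2 * m)) :
    ∃ c : K, ∀ y : K, y ^ (2 ^ m + 1) = 1 →
      y ^ (2 ^ n + 1) + c * y ^ (2 ^ n) + c ^ (2 ^ m) * y + 1 ≠ 0 := by
  classical
  have : Fact (Nat.Prime 2) := ⟨Nat.prime_two⟩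
  have : CharP K 2 := charP_of_card_eq_prime_pow hcard
  have hr : 4 ≤ 2 ^ m := Nat.pow_le_pow_right two_pos hm
  set R := univ.image fun c : K => c + c ^ 2 ^ m
  set T := (nthRootsFinset (2 ^ m + 1) (1 : K)).image fun y => y + y⁻¹
  have hR : 2 ^ m ≤ #R := by
    have := card_le_mul_card_image_add_pow (K := K) (q := 2 ^ m) (by omega)
    rw [hcard, pow_mul', sq] at this
    exact Nat.le_of_mul_le_mul_left this (by positivity)
  have hT : 2 * #T ≤ 2 ^ m + 1 + 2 := two_mul_card_image_add_inv_nthRootsFinset_le _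
  obtain ⟨t, htR, htT⟩ := exists_mem_notMem_of_card_lt_card (by omega : #T < #R)
  obtain ⟨c, -, rfl⟩ := mem_image.mp htR
  refine ⟨c, fun y hy hG => htT <| mem_image.mpr
    ⟨y, (mem_nthRootsFinset (by omega) 1).mpr hy, ?_⟩⟩
  have hy0 : y ≠ 0 := by rintro rfl; simp at hy
  have hys : y ^ 2 ^ n = y := by
    obtain ⟨q, hq⟩ := hdvd
    have := Nat.one_le_two_pow (n := n)
    rw [show 2 ^ n = (2 ^ m + 1) * q + 1 by omega, pow_succ, pow_mul, hy, one_pow, one_mul]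
  rw [pow_succ, hys] at hG
  exact (eq_add_inv_of_sq_add_mul_add_one_eq_zero hy0 (by linear_combination hG)).symm

/-- If `m > 1` and `r + 1` divides `s - 1`, there exists `c ∈ F_{r^2}` such that
`G(c,y)` has no root `y ∈ μ_{r+1}`. -/
theorem stmt10 (m n : ℕ) (hm : 1 < m) (hn : 1 ≤ n)
    (hdvd : (2 ^ m + 1) ∣ (2 ^ n - 1))
    (K : Type) [Field K] [Fintype K] (hcard : Fintype.card K = 2 ^ (2 * m)) :
    ∃ c : K, ∀ y : K, y ^ (2 ^ m + 1) = 1 →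
      y ^ (2 ^ n + 1) + c * y ^ (2 ^ n) + c ^ (2 ^ m) * y + 1 ≠ 0 :=
  stmt10_general m n hm hdvd K hcard
end

section
/- Let r = 2^m and s = 2^n with m, n ≥ 1. There exists c ∈ F_{r^2} such that the polynomial y^{s+1} + c y^s + c^r y + 1 has no roots y in μ_{r+1} if and only if r > 2 and r + 1 does not divide s + 1. -/
/-!
Write `q = 2^m`, `s = 2^n`, `μ = μ_{q+1}` and `f_c(y) = y^{s+1} + c y^s + c^q y + 1`.

If `q + 1 ∣ s + 1`, then `y^s = y^q` on `μ`, so `f_c(y) = c y^q + c^q y` vanishes at every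
`y ∈ μ` with `y² = c^{1-q}` (and `f_0(1) = 0`). If `q = 2`, every `c ≠ 0` lies in `μ`, and
`f_c(c) = 0` for `c ∈ μ`.

Conversely let `q > 2` and `q + 1 ∤ s + 1`. If `q + 1 ∣ s - 1`, then on `μ`
`f_c(y) = y² + (c + c^q) y + 1`, so `f_c` has a root in `μ` only if `c + c^q = y + y^q` for some
`y ∈ μ`. Since `y` and `y^q` give the same value there are at most `q/2 + 1 < q` such values,
and each is taken by at most `q` elements `c`.

Otherwise count the pairs `(c, y)` with `y ∈ μ` and `f_c(y) = 0`: for fixed `y` this is an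
equation of degree `q` in `c`, so there are at most `q (q + 1)` pairs. If every `f_c` had a root
in `μ` there would be at least `q² + q + 1`: every `c ∈ μ` has the roots `c` and `c'` with
`c'^s = c^q`, which coincide only if `c^{s+1} = 1`, i.e. if `c` is a root of `f_0`; and for `y`
of order `q + 1` the element `c = (y^{s+1} + 1)/(y^s + y)` of `F_q ∖ {0, 1}` has the two roots
`y` and `y⁻¹`.
-/

open Finset Polynomial

namespace BCCompatible

theorem card_le_of_forall_mul_pow_add_eq_zero {R : Type*} [CommRing R] [IsDomain R] {k : ℕ}
    (hk : 2 ≤ k) {a b e : R} (ha : a ≠ 0) (s : Finset R)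
    (h : ∀ x ∈ s, a * x ^ k + b * x + e = 0) : #s ≤ k := by
  set p : R[X] := C a * X ^ k + C b * X + C e
  have hdeg : p.natDegree = k := by
    simp only [p]
    compute_degree!
    · simpa [show k ≠ 1 by omega, show k ≠ 0 by omega] using ha
    all_goals omega
  have hp : p ≠ 0 := ne_zero_of_natDegree_gt (n := 0) (by omega)
  rw [← hdeg]
  refine card_le_degree_of_subset_roots fun x hx => ?_
  rw [mem_roots hp]
  simpa [p] using h x hx

theorem card_nthRootsFinset_le {R : Type*} [CommRing R] [IsDomain R] (n : ℕ) (a : R) :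
    #(nthRootsFinset n a) ≤ n := by
  classical
  rw [nthRootsFinset_def]
  exact (Multiset.toFinset_card_le _).trans (card_nthRoots n a)

variable {K : Type*} [Field K] {q s : ℕ}

def bcPoly (q s : ℕ) (c y : K) : K := y ^ (s + 1) + c * y ^ s + c ^ q * y + 1

theorem bcPoly_zero (hq : q ≠ 0) (y : K) : bcPoly q s 0 y = y ^ (s + 1) + 1 := by
  simp [bcPoly, hq]

theorem bcPoly_eq_mul {c : K} (hc : c ^ (q + 1) = 1) (y : K) :
    bcPoly q s c y = (y ^ s + c ^ q) * (y + c) := by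
  rw [bcPoly, ← hc]; ring

theorem bcPoly_inv_mul_pow {c y : K} (hc : c ^ q = c) (hy : y ≠ 0) :
    bcPoly q s c y⁻¹ * y ^ (s + 1) = bcPoly q s c y := by
  have ha : y⁻¹ ^ s * y ^ s = 1 := by rw [← mul_pow, inv_mul_cancel₀ hy, one_pow]
  have hb : y⁻¹ * y = 1 := inv_mul_cancel₀ hy
  rw [bcPoly, bcPoly, hc]
  linear_combination (y⁻¹ * y + c * y) * ha + (1 + c * y ^ s) * hb

section Roots

variable [DecidableEq K]

noncomputable def bcRoots (q s : ℕ) (c : K) : Finset K :=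
  {y ∈ nthRootsFinset (q + 1) (1 : K) | bcPoly q s c y = 0}

theorem mem_bcRoots {c y : K} : y ∈ bcRoots q s c ↔ y ^ (q + 1) = 1 ∧ bcPoly q s c y = 0 := by
  rw [bcRoots, mem_filter, mem_nthRootsFinset (Nat.succ_pos q)]

theorem sum_card_bcRoots_le [Fintype K] (hq : 2 ≤ q) :
    ∑ c : K, #(bcRoots q s c) ≤ #(nthRootsFinset (q + 1) (1 : K)) * q :=
  calc ∑ c : K, #(bcRoots q s c)
      = ∑ y ∈ nthRootsFinset (q + 1) (1 : K), #{c : K | bcPoly q s c y = 0} :=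
        sum_card_bipartiteAbove_eq_sum_card_bipartiteBelow _
    _ ≤ ∑ _y ∈ nthRootsFinset (q + 1) (1 : K), q := by
        refine sum_le_sum fun y hy => card_le_of_forall_mul_pow_add_eq_zero hq
          (ne_zero_of_mem_nthRootsFinset one_ne_zero hy) (b := y ^ s) (e := y ^ (s + 1) + 1) _
          fun c hc => ?_
        have hroot := (mem_filter.mp hc).2
        rw [bcPoly] at hroot
        linear_combination hroot
    _ = _ := by rw [sum_const, smul_eq_mul]

end Roots

theorem pow_pow_eq_self [Fintype K] (hcard : Fintype.card K = q ^ 2) (x : K) :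
    (x ^ q) ^ q = x := by
  rw [← pow_mul, ← sq, ← hcard, FiniteField.pow_card]

theorem exists_orderOf_eq_succ [Fintype K] (hcard : Fintype.card K = q ^ 2) :
    ∃ y : K, orderOf y = q + 1 := by
  classical
  have hq : 1 < q := by
    have := Fintype.one_lt_card (α := K)
    nlinarith
  obtain ⟨g, hg⟩ := IsCyclic.exists_ofOrder_eq_natCard (α := Kˣ)
  rw [Nat.card_eq_fintype_card, Fintype.card_units, hcard] at hg
  have hfactor : q ^ 2 - 1 = (q + 1) * (q - 1) := by simpa using Nat.sq_sub_sq q 1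
  refine ⟨(g : K) ^ (q - 1), ?_⟩
  rw [orderOf_pow_of_dvd (by omega) (by rw [orderOf_units, hg, hfactor]; exact dvd_mul_left _ _),
    orderOf_units, hg, hfactor, Nat.mul_div_cancel _ (by omega)]

section CharTwo

variable [CharP K 2]

theorem pow_two_pow_injective (n : ℕ) : Function.Injective fun x : K => x ^ 2 ^ n :=
  iterateFrobenius_inj K 2 n

theorem exists_pow_two_pow_eq [Fintype K] (n : ℕ) (a : K) : ∃ x : K, x ^ 2 ^ n = a :=
  (iterateFrobeniusEquiv K 2 n).surjective a

theorem bcPoly_self_eq_zero {c : K} (hc : c ^ (q + 1) = 1) : bcPoly q s c c = 0 := by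
  rw [bcPoly_eq_mul hc, CharTwo.add_self_eq_zero, mul_zero]

theorem bcPoly_eq_zero_of_pow_eq {c y : K} (hc : c ^ (q + 1) = 1) (hy : y ^ s = c ^ q) :
    bcPoly q s c y = 0 := by
  rw [bcPoly_eq_mul hc, hy, CharTwo.add_self_eq_zero, zero_mul]

theorem div_pow_two_pow_eq_self {m : ℕ} {y : K} (hy0 : y ≠ 0) (hyq : y ^ 2 ^ m = y⁻¹)
    (hv : y ^ s + y ≠ 0) :
    ((y ^ (s + 1) + 1) / (y ^ s + y)) ^ 2 ^ m = (y ^ (s + 1) + 1) / (y ^ s + y) := by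
  have hv' : y⁻¹ ^ s + y⁻¹ ≠ 0 := fun h =>
    hv (CharTwo.add_eq_zero.mpr (by simpa using CharTwo.add_eq_zero.mp h))
  have ha : y⁻¹ ^ s * y ^ s = 1 := by rw [← mul_pow, inv_mul_cancel₀ hy0, one_pow]
  have hb : y⁻¹ * y = 1 := inv_mul_cancel₀ hy0
  rw [div_pow, add_pow_char_pow, add_pow_char_pow, one_pow, pow_right_comm y (s + 1),
    pow_right_comm y s, hyq, div_eq_div_iff hv' hv]
  linear_combination (y⁻¹ - y) * ha + (y⁻¹ ^ s - y ^ s) * hb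

variable [Fintype K]

theorem exists_pow_succ_eq_one_and_mul_pow_eq (hcard : Fintype.card K = q ^ 2) {c : K}
    (hc : c ≠ 0) : ∃ y : K, y ^ (q + 1) = 1 ∧ c * y ^ q = c ^ q * y := by
  obtain ⟨y, hy⟩ := exists_pow_two_pow_eq 1 (c / c ^ q)
  rw [pow_one] at hy
  have hcq : c ^ q ≠ 0 := pow_ne_zero q hc
  have hy0 : y ≠ 0 := by
    rintro rfl
    exact div_ne_zero hc hcq (by simpa using hy.symm)
  have hμ : y ^ (q + 1) = 1 := by
    refine CharTwo.sq_inj.mp ?_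
    rw [one_pow, ← pow_mul, mul_comm, pow_mul, hy, div_pow, pow_succ (c ^ q),
      pow_pow_eq_self hcard, pow_succ, mul_comm c]
    exact div_self (mul_ne_zero hcq hc)
  refine ⟨y, hμ, mul_right_cancel₀ hy0 ?_⟩
  rw [mul_assoc, ← pow_succ, hμ, mul_assoc, ← sq, hy, mul_div_cancel₀ _ hcq, mul_one]

theorem exists_bcPoly_eq_zero_of_dvd (hcard : Fintype.card K = q ^ 2) (hdvd : q + 1 ∣ s + 1)
    (c : K) : ∃ y : K, y ^ (q + 1) = 1 ∧ bcPoly q s c y = 0 := by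
  have hq : q ≠ 0 := by rintro rfl; simp at hcard
  rcases eq_or_ne c 0 with rfl | hc
  · exact ⟨1, one_pow _, by rw [bcPoly_zero hq, one_pow, CharTwo.add_self_eq_zero]⟩
  obtain ⟨y, hμ, hy⟩ := exists_pow_succ_eq_one_and_mul_pow_eq hcard hc
  have hs : y ^ (s + 1) = 1 := by
    obtain ⟨k, hk⟩ := hdvd
    rw [hk, pow_mul, hμ, one_pow]
  have hy0 : y ≠ 0 := by rintro rfl; simp at hμ
  have hsq : y ^ s = y ^ q := mul_right_cancel₀ hy0 (by rw [← pow_succ, ← pow_succ, hs, hμ])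
  refine ⟨y, hμ, ?_⟩
  rw [bcPoly, hs, hsq]
  linear_combination hy + (1 + c ^ q * y) * (CharTwo.two_eq_zero : (2 : K) = 0)

theorem exists_bcPoly_eq_zero_of_card_eq_four (hcard : Fintype.card K = 2 ^ 2) (c : K) :
    ∃ y : K, y ^ (2 + 1) = 1 ∧ bcPoly 2 s c y = 0 := by
  rcases eq_or_ne c 0 with rfl | hc
  · exact ⟨1, one_pow _, by rw [bcPoly_zero two_ne_zero, one_pow, CharTwo.add_self_eq_zero]⟩
  have hc3 : c ^ (2 + 1) = 1 := by
    simpa [hcard] using FiniteField.pow_card_sub_one_eq_one c hc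
  exact ⟨c, hc3, bcPoly_self_eq_zero hc3⟩

section Roots

variable [DecidableEq K]

theorem card_filter_add_pow_eq_le (hq : 2 ≤ q) (w : K) : #{c : K | c + c ^ q = w} ≤ q :=
  card_le_of_forall_mul_pow_add_eq_zero hq one_ne_zero (b := 1) (e := w) _ fun c hc => by
    linear_combination (mem_filter.mp hc).2 + w * (CharTwo.two_eq_zero : (2 : K) = 0)

theorem card_image_add_pow_lt (hcard : Fintype.card K = q ^ 2) (hq : 2 < q) :
    #((nthRootsFinset (q + 1) (1 : K)).image fun y => y + y ^ q) < q := by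
  set μ := nthRootsFinset (q + 1) (1 : K)
  have h1 : (1 : K) ∈ μ := by simp [μ]
  have hpair : 2 * #((μ.erase 1).image fun y => y + y ^ q) ≤ #(μ.erase 1) := by
    refine mul_card_image_le_card _ 2 fun w hw => ?_
    obtain ⟨y, hy, rfl⟩ := mem_image.mp hw
    obtain ⟨hy1, hyμ⟩ := mem_erase.mp hy
    rw [mem_nthRootsFinset (by omega)] at hyμ
    have hyq : (y ^ q) ^ q = y := pow_pow_eq_self hcard y
    have hyq1 : y ^ q ≠ 1 := fun h => hy1 (by rw [← hyq, h, one_pow])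
    have hyqy : y ^ q ≠ y := fun h => hy1 <| CharTwo.sq_inj.mp <| by
      rw [one_pow, sq, ← hyμ, pow_succ, h]
    have hyqμ : y ^ q ∈ μ.erase 1 := by
      rw [mem_erase, mem_nthRootsFinset (by omega), ← pow_mul, mul_comm, pow_mul, hyμ, one_pow]
      exact ⟨hyq1, rfl⟩
    refine one_lt_card.mpr
      ⟨y, mem_filter.mpr ⟨hy, rfl⟩, y ^ q, mem_filter.mpr ⟨hyqμ, ?_⟩, hyqy.symm⟩
    rw [hyq, add_comm]
  have himage :
      μ.image (fun y => y + y ^ q) = (insert 1 (μ.erase 1)).image fun y => y + y ^ q := by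
    rw [insert_erase h1]
  have hμ : #(μ.erase 1) ≤ q := by
    have : #μ ≤ q + 1 := card_nthRootsFinset_le _ _
    rw [card_erase_of_mem h1]
    omega
  rw [himage, image_insert]
  have := card_insert_le (1 + 1 ^ q : K) ((μ.erase 1).image fun y => y + y ^ q)
  omega

theorem two_le_card_bcRoots {n : ℕ} {c : K} (hc : c ^ (q + 1) = 1) (hcs : c ^ (2 ^ n + 1) ≠ 1) :
    2 ≤ #(bcRoots q (2 ^ n) c) := by
  obtain ⟨y, hy⟩ := exists_pow_two_pow_eq n (c ^ q)
  have hyμ : y ^ (q + 1) = 1 := pow_two_pow_injective n <| by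
    show (y ^ (q + 1)) ^ 2 ^ n = 1 ^ 2 ^ n
    rw [pow_right_comm, hy, pow_right_comm, hc, one_pow, one_pow]
  have hyc : y ≠ c := by
    rintro rfl
    exact hcs (by rw [pow_succ, hy, ← pow_succ, hc])
  refine one_lt_card.mpr ⟨c, mem_bcRoots.mpr ⟨hc, bcPoly_self_eq_zero hc⟩, y,
    mem_bcRoots.mpr ⟨hyμ, bcPoly_eq_zero_of_pow_eq hc hy⟩, hyc.symm⟩

theorem two_mul_card_le_sum_card_bcRoots {n : ℕ} (hq : q ≠ 0) :
    2 * #(nthRootsFinset (q + 1) (1 : K)) ≤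
      #(bcRoots q (2 ^ n) (0 : K)) +
        ∑ c ∈ nthRootsFinset (q + 1) (1 : K), #(bcRoots q (2 ^ n) c) := by
  have hzero : #(bcRoots q (2 ^ n) (0 : K)) =
      ∑ c ∈ nthRootsFinset (q + 1) (1 : K), if c ∈ bcRoots q (2 ^ n) 0 then 1 else 0 := by
    have hsub : bcRoots q (2 ^ n) (0 : K) ⊆ nthRootsFinset (q + 1) 1 := filter_subset _ _
    rw [← card_filter, filter_mem_eq_inter, inter_eq_right.mpr hsub]
  rw [hzero, ← sum_add_distrib, mul_comm, ← smul_eq_mul, ← sum_const]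
  refine sum_le_sum fun c hc => ?_
  rw [mem_nthRootsFinset (Nat.succ_pos q)] at hc
  have hself : 1 ≤ #(bcRoots q (2 ^ n) c) :=
    one_le_card.mpr ⟨c, mem_bcRoots.mpr ⟨hc, bcPoly_self_eq_zero hc⟩⟩
  split_ifs with h0
  · omega
  · refine (two_le_card_bcRoots hc fun hcs => h0 ?_).trans (Nat.le_add_left _ _)
    rw [mem_bcRoots, bcPoly_zero hq, hcs]
    exact ⟨hc, CharTwo.add_self_eq_zero 1⟩

theorem exists_two_le_card_bcRoots {m n : ℕ} (hcard : Fintype.card K = (2 ^ m) ^ 2)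
    (hs₁ : ¬ 2 ^ m + 1 ∣ 2 ^ n + 1) (hs₂ : ¬ 2 ^ m + 1 ∣ 2 ^ n - 1) :
    ∃ c : K, c ≠ 0 ∧ c ^ (2 ^ m + 1) ≠ 1 ∧ 2 ≤ #(bcRoots (2 ^ m) (2 ^ n) c) := by
  obtain ⟨y, hy⟩ := exists_orderOf_eq_succ hcard
  have hpow : ∀ k, y ^ k = 1 ↔ 2 ^ m + 1 ∣ k := fun k => by
    rw [← hy, orderOf_dvd_iff_pow_eq_one]
  have hyμ : y ^ (2 ^ m + 1) = 1 := (hpow _).mpr dvd_rfl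
  have hy0 : y ≠ 0 := by rintro rfl; simp at hyμ
  have hys₁ : y ^ (2 ^ n + 1) ≠ 1 := fun h => hs₁ ((hpow _).mp h)
  have hys₂ : y ^ 2 ^ n ≠ y := fun h => hs₂ <| (hpow _).mp <| mul_right_cancel₀ hy0 <| by
    rw [← pow_succ, Nat.sub_add_cancel Nat.one_le_two_pow, h, one_mul]
  have hy1 : y ≠ 1 := by rintro rfl; exact hys₁ (one_pow _)
  have hyq : y ^ 2 ^ m = y⁻¹ := eq_inv_of_mul_eq_one_left (by rw [← pow_succ, hyμ])
  have hv : y ^ 2 ^ n + y ≠ 0 := fun h => hys₂ (CharTwo.add_eq_zero.mp h)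
  have hu : y ^ (2 ^ n + 1) + 1 ≠ 0 := fun h => hys₁ (CharTwo.add_eq_zero.mp h)
  set c := (y ^ (2 ^ n + 1) + 1) / (y ^ 2 ^ n + y)
  have hcv : c * (y ^ 2 ^ n + y) = y ^ (2 ^ n + 1) + 1 := div_mul_cancel₀ _ hv
  have hcq : c ^ 2 ^ m = c := div_pow_two_pow_eq_self hy0 hyq hv
  have hroot : bcPoly (2 ^ m) (2 ^ n) c y = 0 := by
    rw [bcPoly, hcq]
    linear_combination hcv + (y ^ (2 ^ n + 1) + 1) * (CharTwo.two_eq_zero : (2 : K) = 0)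
  have hroot' : bcPoly (2 ^ m) (2 ^ n) c y⁻¹ = 0 :=
    (mul_eq_zero.mp ((bcPoly_inv_mul_pow hcq hy0).trans hroot)).resolve_right (pow_ne_zero _ hy0)
  refine ⟨c, div_ne_zero hu hv, fun hc1 => ?_, one_lt_card.mpr ⟨y, ?_, y⁻¹, ?_, ?_⟩⟩
  · have : c = 1 := CharTwo.sq_inj.mp (by rw [one_pow, sq, ← hc1, pow_succ, hcq])
    have hfactor : (y ^ 2 ^ n + 1) * (y + 1) = 0 := by
      rw [this, one_mul] at hcv
      linear_combination -hcv + (y ^ 2 ^ n + y) * (CharTwo.two_eq_zero : (2 : K) = 0)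
    rcases mul_eq_zero.mp hfactor with h | h
    · exact hy1 (pow_two_pow_injective n (by simpa using CharTwo.add_eq_zero.mp h))
    · exact hy1 (CharTwo.add_eq_zero.mp h)
  · exact mem_bcRoots.mpr ⟨hyμ, hroot⟩
  · exact mem_bcRoots.mpr ⟨by rw [inv_pow, hyμ, inv_one], hroot'⟩
  · intro h
    exact hy1 (CharTwo.sq_inj.mp (by rw [one_pow, sq]; nth_rw 2 [h]; exact mul_inv_cancel₀ hy0))

theorem card_add_card_le_sum_card_bcRoots {m n : ℕ} (hcard : Fintype.card K = (2 ^ m) ^ 2)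
    (hs₁ : ¬ 2 ^ m + 1 ∣ 2 ^ n + 1) (hs₂ : ¬ 2 ^ m + 1 ∣ 2 ^ n - 1)
    (hne : ∀ c : K, (bcRoots (2 ^ m) (2 ^ n) c).Nonempty) :
    #(nthRootsFinset (2 ^ m + 1) (1 : K)) + Fintype.card K ≤
      ∑ c : K, #(bcRoots (2 ^ m) (2 ^ n) c) := by
  obtain ⟨a, ha0, haμ, ha⟩ := exists_two_le_card_bcRoots hcard hs₁ hs₂
  have hμ := two_mul_card_le_sum_card_bcRoots (K := K) (n := n) (pow_ne_zero m two_ne_zero)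
  set μ := nthRootsFinset (2 ^ m + 1) (1 : K)
  have h0 : (0 : K) ∈ μᶜ := by simp [μ]
  have ha' : a ∈ μᶜ.erase 0 := by simp [μ, ha0, haμ]
  have hrest : #((μᶜ.erase 0).erase a) ≤
      ∑ c ∈ (μᶜ.erase 0).erase a, #(bcRoots (2 ^ m) (2 ^ n) c) := by
    simpa using card_nsmul_le_sum _ _ 1 fun c _ => one_le_card.mpr (hne c)
  have hcompl : #μᶜ = Fintype.card K - #μ := card_compl μ
  have hμle : #μ ≤ Fintype.card K := card_le_univ μ
  rw [card_erase_of_mem ha', card_erase_of_mem h0] at hrest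
  have : 1 ≤ #(μᶜ.erase 0) := card_pos.mpr ⟨a, ha'⟩
  rw [card_erase_of_mem h0] at this
  rw [← sum_add_sum_compl μ, ← add_sum_erase _ _ h0, ← add_sum_erase _ _ ha']
  omega

end Roots

theorem exists_forall_bcPoly_ne_zero_of_dvd_sub_one (hcard : Fintype.card K = q ^ 2)
    (hq : 2 < q) (hs : 1 ≤ s) (hdvd : q + 1 ∣ s - 1) :
    ∃ c : K, ∀ y : K, y ^ (q + 1) = 1 → bcPoly q s c y ≠ 0 := by
  classical
  set W := (nthRootsFinset (q + 1) (1 : K)).image fun y => y + y ^ q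
  obtain ⟨c, hc⟩ : ∃ c : K, c + c ^ q ∉ W := by
    by_contra! h
    have hle := card_le_mul_card_image_of_maps_to (s := univ) (fun c _ => h c) q
      fun w _ => card_filter_add_pow_eq_le hq.le w
    have hlt := card_image_add_pow_lt hcard hq
    rw [card_univ, hcard] at hle
    nlinarith
  refine ⟨c, fun y hyμ hroot =>
    hc (mem_image.mpr ⟨y, (mem_nthRootsFinset (by omega) 1).mpr hyμ, ?_⟩)⟩
  have hys : y ^ s = y := by
    obtain ⟨k, hk⟩ := hdvd
    rw [show s = (q + 1) * k + 1 by omega, pow_succ, pow_mul, hyμ, one_pow, one_mul]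
  rw [bcPoly, pow_succ, hys] at hroot
  linear_combination y ^ q * hroot - (y + c + c ^ q) * hyμ -
    (c + c ^ q) * (CharTwo.two_eq_zero : (2 : K) = 0)

theorem exists_forall_bcPoly_ne_zero_of_not_dvd {m n : ℕ} (hcard : Fintype.card K = (2 ^ m) ^ 2)
    (hq : 2 < 2 ^ m) (hs₁ : ¬ 2 ^ m + 1 ∣ 2 ^ n + 1) (hs₂ : ¬ 2 ^ m + 1 ∣ 2 ^ n - 1) :
    ∃ c : K, ∀ y : K, y ^ (2 ^ m + 1) = 1 → bcPoly (2 ^ m) (2 ^ n) c y ≠ 0 := by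
  classical
  by_contra! hroots
  have hlower := card_add_card_le_sum_card_bcRoots hcard hs₁ hs₂ fun c =>
    let ⟨y, hy, hc⟩ := hroots c
    ⟨y, mem_bcRoots.mpr ⟨hy, hc⟩⟩
  have hupper := sum_card_bcRoots_le (K := K) (s := 2 ^ n) hq.le
  have hμ := card_nthRootsFinset_le (2 ^ m + 1) (1 : K)
  rw [hcard] at hlower
  generalize 2 ^ m = q at *
  generalize #(nthRootsFinset (q + 1) (1 : K)) = k at *
  nlinarith

end CharTwo

end BCCompatible

open BCCompatible

theorem stmt12_general (m n : ℕ) (hm : 1 ≤ m)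
    (K : Type) [Field K] [Fintype K] (hcard : Fintype.card K = 2 ^ (2 * m)) :
    (∃ c : K, ∀ y : K, y ^ (2 ^ m + 1) = 1 →
        y ^ (2 ^ n + 1) + c * y ^ (2 ^ n) + c ^ (2 ^ m) * y + 1 ≠ 0)
      ↔ (2 < 2 ^ m ∧ ¬ (2 ^ m + 1) ∣ (2 ^ n + 1)) := by
  classical
  have : CharP K 2 := charP_of_card_eq_prime_pow hcard
  replace hcard : Fintype.card K = (2 ^ m) ^ 2 := by rw [hcard, ← pow_mul, mul_comm]
  change (∃ c : K, ∀ y : K, y ^ (2 ^ m + 1) = 1 → bcPoly (2 ^ m) (2 ^ n) c y ≠ 0) ↔ _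
  constructor
  · rintro ⟨c, hc⟩
    refine ⟨not_le.mp fun hq => ?_, fun hdvd => ?_⟩
    · have hq2 : 2 ^ m = 2 := le_antisymm hq (by simpa using Nat.pow_le_pow_right two_pos hm)
      rw [hq2] at hc hcard
      obtain ⟨y, hy, hroot⟩ := exists_bcPoly_eq_zero_of_card_eq_four hcard c
      exact hc y hy hroot
    · obtain ⟨y, hy, hroot⟩ := exists_bcPoly_eq_zero_of_dvd hcard hdvd c
      exact hc y hy hroot
  · rintro ⟨hq, hs₁⟩
    by_cases hs₂ : 2 ^ m + 1 ∣ 2 ^ n - 1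
    · exact exists_forall_bcPoly_ne_zero_of_dvd_sub_one hcard hq Nat.one_le_two_pow hs₂
    · exact exists_forall_bcPoly_ne_zero_of_not_dvd hcard hq hs₁ hs₂

/-- Theorem 2: there exists `c ∈ F_{r^2}` such that `y^{s+1} + c y^s + c^r y + 1` has no
root in `μ_{r+1}` iff `r > 2` and `r + 1` does not divide `s + 1`. -/
theorem stmt12 (m n : ℕ) (hm : 1 ≤ m) (hn : 1 ≤ n)
    (K : Type) [Field K] [Fintype K] (hcard : Fintype.card K = 2 ^ (2 * m)) :
    (∃ c : K, ∀ y : K, y ^ (2 ^ m + 1) = 1 →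
        y ^ (2 ^ n + 1) + c * y ^ (2 ^ n) + c ^ (2 ^ m) * y + 1 ≠ 0)
      ↔ (2 < 2 ^ m ∧ ¬ (2 ^ m + 1) ∣ (2 ^ n + 1)) :=
  stmt12_general m n hm K hcard
end

section
/- Let r = 2^m, s = 2^n, d ∈ F_{r^2} \ F_r, c ∈ F_{r^2}, and a ∈ F_{r^2} nonzero. With F and G_a as defined, for any x_0 ∈ F_{r^2} one has G_a(x_0) + G_a(x_0)^r = (d + d^r) a^{s + rs} (x_0 + x_0^r)^s. In particular, if G_a(x_0) = 0 then x_0^r = x_0. -/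
/-!
Every monomial of `F` has exponent a sum of two powers of two, so `G_a(x) = F(ax + a) - F(ax) - F(a)`
is the symmetric biadditive polar form `B(ax, a)` of `F`. The Frobenius `z ↦ z^r` is an involution
of `F_{r^2}` that permutes the terms of `B` among themselves, except that it turns the coefficient
`d` of `y^s a^{rs} + y^{rs} a^s` into `d^r`. Hence `G_a + G_a^r = (d + d^r)(y^s a^{rs} + y^{rs} a^s)`
with `y = a x`, which factors as claimed.
-/

section Polarization

variable {R : Type*} [CommRing R]

def dembowskiOstrom (r s : ℕ) (c d x : R) : R :=
  x * (x ^ s + x ^ r + c * x ^ (r * s)) + x ^ s * (c ^ r * x ^ r + d * x ^ (r * s))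
    + x ^ ((s + 1) * r)

def dembowskiOstromPolar (r s : ℕ) (c d y a : R) : R :=
  (y ^ s * a + y * a ^ s) + (y ^ r * a + y * a ^ r) + c * (y ^ (r * s) * a + y * a ^ (r * s))
    + c ^ r * (y ^ s * a ^ r + y ^ r * a ^ s) + d * (y ^ s * a ^ (r * s) + y ^ (r * s) * a ^ s)
    + (y ^ (r * s) * a ^ r + y ^ r * a ^ (r * s))

variable {r s : ℕ}

theorem dembowskiOstrom_add_sub_sub (hr : ∀ x y : R, (x + y) ^ r = x ^ r + y ^ r)
    (hs : ∀ x y : R, (x + y) ^ s = x ^ s + y ^ s)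
    (c d y a : R) :
    dembowskiOstrom r s c d (y + a) - dembowskiOstrom r s c d y - dembowskiOstrom r s c d a =
      dembowskiOstromPolar r s c d y a := by
  have hrs (x y : R) : (x + y) ^ (r * s) = x ^ (r * s) + y ^ (r * s) := by
    rw [pow_mul, hr, hs, ← pow_mul, ← pow_mul]
  have hsr (x : R) : x ^ ((s + 1) * r) = x ^ (r * s) * x ^ r := by
    rw [← pow_add]; ring_nf
  simp only [dembowskiOstrom, dembowskiOstromPolar, hsr, hr, hs, hrs]
  ring

theorem dembowskiOstromPolar_pow (hr : ∀ x y : R, (x + y) ^ r = x ^ r + y ^ r)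
    (hinv : ∀ x : R, (x ^ r) ^ r = x) (c d y a : R) :
    dembowskiOstromPolar r s c d y a ^ r = dembowskiOstromPolar r s c d y a
      + (d ^ r - d) * (y ^ s * a ^ (r * s) + y ^ (r * s) * a ^ s) := by
  have hrs (x : R) : (x ^ (r * s)) ^ r = x ^ s := by rw [pow_mul, pow_right_comm, hinv]
  have hsr (x : R) : (x ^ s) ^ r = x ^ (r * s) := by rw [pow_right_comm, ← pow_mul]
  simp only [dembowskiOstromPolar, hr, mul_pow, hinv, hrs, hsr]
  ring

end Polarization

theorem stmt14_general (m n : ℕ)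
    (K : Type) [Field K] [Fintype K] (hcard : Fintype.card K = 2 ^ (2 * m))
    (c d : K) (hd : d ^ (2 ^ m) ≠ d) (a : K) (ha : a ≠ 0) (x₀ : K) :
    let r := 2 ^ m; let s := 2 ^ n
    let F : K → K := fun x =>
      x * (x ^ s + x ^ r + c * x ^ (r * s)) + x ^ s * (c ^ r * x ^ r + d * x ^ (r * s))
        + x ^ ((s + 1) * r)
    let G : K → K := fun x => F (a * x) + F (a * x + a) + F a
    G x₀ + (G x₀) ^ r = (d + d ^ r) * a ^ (s + r * s) * (x₀ + x₀ ^ r) ^ s ∧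
      (G x₀ = 0 → x₀ ^ r = x₀) := by
  intro r s F G
  have : CharP K 2 := charP_of_card_eq_prime_pow hcard
  have hr (x y : K) : (x + y) ^ r = x ^ r + y ^ r := add_pow_char_pow x y 2 m
  have hs (x y : K) : (x + y) ^ s = x ^ s + y ^ s := add_pow_char_pow x y 2 n
  have hinv (x : K) : (x ^ r) ^ r = x := by
    rw [← pow_mul, ← pow_add, ← two_mul, ← hcard, FiniteField.pow_card]
  have hG : G x₀ = dembowskiOstromPolar r s c d (a * x₀) a := by
    change dembowskiOstrom r s c d (a * x₀) + dembowskiOstrom r s c d (a * x₀ + a)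
      + dembowskiOstrom r s c d a = _
    rw [← dembowskiOstrom_add_sub_sub hr hs, CharTwo.sub_eq_add, CharTwo.sub_eq_add]
    ring
  have key : G x₀ + G x₀ ^ r = (d + d ^ r) * a ^ (s + r * s) * (x₀ + x₀ ^ r) ^ s := by
    rw [hG, dembowskiOstromPolar_pow hr hinv, hs, ← pow_mul, CharTwo.sub_eq_add]
    linear_combination CharTwo.add_self_eq_zero (dembowskiOstromPolar r s c d (a * x₀) a)
  refine ⟨key, fun hG0 => ?_⟩
  have hdd : d + d ^ r ≠ 0 := by rwa [ne_eq, CharTwo.add_eq_zero, eq_comm]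
  rw [hG0, zero_pow (by positivity), add_zero, eq_comm] at key
  have hx : (x₀ + x₀ ^ r) ^ s = 0 := 
    (mul_eq_zero.mp key).resolve_left (mul_ne_zero hdd (pow_ne_zero _ ha))
  exact (CharTwo.add_eq_zero.mp (pow_eq_zero_iff (by positivity) |>.mp hx)).symm

/-- `G_a(x₀) + G_a(x₀)^r = (d + d^r) a^{s+rs} (x₀ + x₀^r)^s`; hence `G_a(x₀) = 0`
implies `x₀^r = x₀`. -/
theorem stmt14 (m n : ℕ) (hm : 1 ≤ m) (hn : 1 ≤ n)
    (K : Type) [Field K] [Fintype K] (hcard : Fintype.card K = 2 ^ (2 * m))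
    (c d : K) (hd : d ^ (2 ^ m) ≠ d) (a : K) (ha : a ≠ 0) (x₀ : K) :
    let r := 2 ^ m; let s := 2 ^ n
    let F : K → K := fun x =>
      x * (x ^ s + x ^ r + c * x ^ (r * s)) + x ^ s * (c ^ r * x ^ r + d * x ^ (r * s))
        + x ^ ((s + 1) * r)
    let G : K → K := fun x => F (a * x) + F (a * x + a) + F a
    G x₀ + (G x₀) ^ r = (d + d ^ r) * a ^ (s + r * s) * (x₀ + x₀ ^ r) ^ s ∧
      (G x₀ = 0 → x₀ ^ r = x₀) :=
  stmt14_general m n K hcard c d hd a ha x₀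
end

section
/- Let r = 2^m, s = 2^n, d ∈ F_{r^2} \ F_r, c ∈ F_{r^2}, a ∈ F_{r^2} nonzero. With F and G_a as defined, if x_0 ∈ F_r then G_a(x_0) = (x_0 + x_0^s) a^{s+1} (1 + c a^{(r-1)s} + c^r a^{r-1} + a^{(s+1)(r-1)}). -/
/-- For `x₀ ∈ F_r`,
`G_a(x₀) = (x₀ + x₀^s) a^{s+1} (1 + c a^{(r-1)s} + c^r a^{r-1} + a^{(s+1)(r-1)})`. -/
theorem stmt15 (m n : ℕ) (hm : 1 ≤ m) (hn : 1 ≤ n)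
    (K : Type) [Field K] [Fintype K] (hcard : Fintype.card K = 2 ^ (2 * m))
    (c d : K) (hd : d ^ (2 ^ m) ≠ d) (a : K) (ha : a ≠ 0)
    (x₀ : K) (hx₀ : x₀ ^ (2 ^ m) = x₀) :
    let r := 2 ^ m; let s := 2 ^ n
    let F : K → K := fun x =>
      x * (x ^ s + x ^ r + c * x ^ (r * s)) + x ^ s * (c ^ r * x ^ r + d * x ^ (r * s))
        + x ^ ((s + 1) * r)
    let G : K → K := fun x => F (a * x) + F (a * x + a) + F a
    G x₀ = (x₀ + x₀ ^ s) * a ^ (s + 1) *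
      (1 + c * a ^ ((r - 1) * s) + c ^ r * a ^ (r - 1) + a ^ ((s + 1) * (r - 1))) := by
  intro r s F G
  haveI hp2 : Fact (Nat.Prime 2) := ⟨Nat.prime_two⟩
  -- K has characteristic 2
  haveI hchar : CharP K 2 := by
    haveI := ringChar.charP K
    obtain ⟨k, hprime, hq⟩ := FiniteField.card K (ringChar K)
    have hdvd : ringChar K ∣ 2 ^ (2 * m) := by
      rw [← hcard, hq]
      exact dvd_pow_self _ k.2.ne'
    have h2 : ringChar K = 2 :=
      (Nat.prime_dvd_prime_iff_eq hprime Nat.prime_two).mp (hprime.dvd_of_dvd_pow hdvd)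
    rw [← h2]
    exact ringChar.charP K
  have h2 : (2 : K) = 0 := by
    have := CharP.cast_eq_zero K 2
    simpa using this
  -- Frobenius maps
  have frobS : ∀ x y : K, (x + y) ^ s = x ^ s + y ^ s := fun x y =>
    add_pow_char_pow x y 2 n
  have frobR : ∀ x y : K, (x + y) ^ r = x ^ r + y ^ r := fun x y =>
    add_pow_char_pow x y 2 m
  have hr1 : ∃ r', r = r' + 1 := ⟨2 ^ m - 1, by have := Nat.one_le_two_pow (n := m); omega⟩
  obtain ⟨r', hr'⟩ := hr1
  -- power facts for x₀
  have hx0r : x₀ ^ r = x₀ := hx₀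
  have hxrs : x₀ ^ (r * s) = x₀ ^ s := by rw [pow_mul, hx0r]
  have hx1s : (x₀ + 1) ^ s = x₀ ^ s + 1 := by rw [frobS, one_pow]
  have hx1r : (x₀ + 1) ^ r = x₀ + 1 := by rw [frobR, one_pow, hx0r]
  have hx1rs : (x₀ + 1) ^ (r * s) = x₀ ^ s + 1 := by rw [pow_mul, hx1r, hx1s]
  have hsplit : ∀ z : K, z ^ ((s + 1) * r) = z ^ (r * s) * z ^ r := by
    intro z; rw [← pow_add]; congr 1; ring
  have one_s : (1 : K) ^ s = 1 := one_pow s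
  have one_r : (1 : K) ^ r = 1 := one_pow r
  have one_rs : (1 : K) ^ (r * s) = 1 := one_pow _
  -- rewrite the RHS into atoms
  have e1 : a ^ (s + 1) * a ^ ((r - 1) * s) = a ^ (r * s) * a := by
    rw [← pow_add, ← pow_succ]; congr 1
    rw [hr', Nat.add_sub_cancel]; ring
  have e2 : a ^ (s + 1) * a ^ (r - 1) = a ^ r * a ^ s := by
    rw [← pow_add, ← pow_add]; congr 1
    rw [hr', Nat.add_sub_cancel]; ring
  have e3 : a ^ (s + 1) * a ^ ((s + 1) * (r - 1)) = a ^ (r * s) * a ^ r := by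
    rw [← pow_add, ← pow_add]; congr 1
    rw [hr', Nat.add_sub_cancel]; ring
  have hRHS : a ^ (s + 1) *
      (1 + c * a ^ ((r - 1) * s) + c ^ r * a ^ (r - 1) + a ^ ((s + 1) * (r - 1)))
      = a ^ s * a + c * (a ^ (r * s) * a) + c ^ r * (a ^ r * a ^ s) + a ^ (r * s) * a ^ r := by
    have e0 : a ^ (s + 1) = a ^ s * a := pow_succ a s
    linear_combination c * e1 + c ^ r * e2 + e3 + e0
  show F (a * x₀) + F (a * x₀ + a) + F a = _
  rw [show a * x₀ + a = a * (x₀ + 1) from by ring, mul_assoc, hRHS]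
  simp only [F, hsplit, mul_pow, hx0r, hxrs, hx1r, hx1s, hx1rs, one_s, one_r, one_rs]
  linear_combination (a ^ (r * s) * a ^ r + a ^ s * a ^ (r * s) * d + a ^ s * a ^ r * c ^ r
    + a * a ^ (r * s) * c + a * a ^ r + a * a ^ s
    + x₀ ^ s * a ^ s * a ^ (r * s) * d + (x₀ ^ s) ^ 2 * a ^ s * a ^ (r * s) * d
    + x₀ * a * a ^ r + x₀ * x₀ ^ s * a ^ r * a ^ (r * s)
    + x₀ * x₀ ^ s * a ^ s * a ^ r * c ^ r + x₀ * x₀ ^ s * a * a ^ (r * s) * c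
    + x₀ * x₀ ^ s * a * a ^ s + x₀ ^ 2 * a * a ^ r) * h2
end

section
/- Theorem 1 (Budaghyan–Carlet): Let r = 2^m, s = 2^n, d ∈ F_{r^2} \ F_r, and c ∈ F_{r^2} such that y^{s+1} + c y^s + c^r y + 1 has no roots y ∈ μ_{r+1}. Then for every nonzero a ∈ F_{r^2} and every b ∈ F_{r^2}, the equation F(x+a) + F(x) = b has either 0 or exactly 2^k solutions x ∈ F_{r^2}, where k = gcd(m,n) and F(x) = x(x^s + x^r + c x^{rs}) + x^s(c^r x^r + d x^{rs}) + x^{(s+1)r}. -/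
/-!
`F` is quadratic over a field of characteristic 2, so `x ↦ F (x + a) + F x + F a` is additive
and every solution set of `F (x + a) + F x = b` is empty or a coset of its kernel. With
`u ↦ u ^ r` the involution of `K / 𝔽_r`, this polar form splits as `u + d * v` with
`u, v ∈ 𝔽_r`; since `d ∉ 𝔽_r` both vanish. Now `v = 0` forces `x = l * a` with `l ∈ 𝔽_r`,
and then `u = (l ^ s + l) a ^ (s + 1) (y ^ (s + 1) + c y ^ s + c ^ r y + 1)`
with `y = a ^ (r - 1) ∈ μ_(r+1)`, so the hypothesis on `c` forces `l ∈ 𝔽_s`. Hence the kernel is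
`a · (𝔽_r ∩ 𝔽_s)`, which has `2 ^ gcd m n` elements.
-/

open Polynomial

theorem pow_pow_eq_self_and_iff_gcd {M : Type*} [Monoid M] (p m n : ℕ) (x : M) :
    x ^ p ^ m = x ∧ x ^ p ^ n = x ↔ x ^ p ^ Nat.gcd m n = x := by
  have periodic : ∀ k, x ^ p ^ k = x ↔ Function.IsPeriodicPt (· ^ p) k x := fun k => by
    rw [Function.IsPeriodicPt, Function.IsFixedPt, pow_iterate]
  simp only [periodic]
  exact ⟨fun h => h.1.gcd h.2,
    fun h => ⟨h.trans_dvd (Nat.gcd_dvd_left m n), h.trans_dvd (Nat.gcd_dvd_right m n)⟩⟩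

theorem FiniteField.card_nthRootsFinset_one {K : Type*} [Field K] [Fintype K] {N : ℕ}
    (hN : N ∣ Fintype.card K - 1) : (nthRootsFinset N (1 : K)).card = N := by
  classical
  obtain ⟨ζ, hζ⟩ := IsCyclic.exists_ofOrder_eq_natCard (α := Kˣ)
  rw [Nat.card_eq_fintype_card, Fintype.card_units] at hζ
  obtain ⟨k, hk⟩ := hN
  have hprim : IsPrimitiveRoot (ζ ^ k) N :=
    (hζ ▸ IsPrimitiveRoot.orderOf ζ).pow (Nat.sub_pos_of_lt Fintype.one_lt_card)
      (by rw [hk, mul_comm])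
  exact (IsPrimitiveRoot.coe_units_iff.mpr hprim).card_nthRootsFinset

theorem FiniteField.ncard_setOf_pow_eq_self {K : Type*} [Field K] [Fintype K] {q : ℕ}
    (hq : q - 1 ∣ Fintype.card K - 1) : {x : K | x ^ q = x}.ncard = q := by
  have hq1 : 0 < q - 1 := Nat.pos_of_ne_zero fun h => by
    rw [h, zero_dvd_iff] at hq
    exact (Nat.sub_pos_of_lt Fintype.one_lt_card).ne' hq
  have hsucc : q - 1 + 1 = q := by omega
  have hset : {x : K | x ^ q = x} = insert 0 ↑(nthRootsFinset (q - 1) (1 : K)) := by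
    ext x
    rw [Set.mem_ofPred_eq, Set.mem_insert_iff, Finset.mem_coe, mem_nthRootsFinset hq1, ← hsucc,
      pow_succ]
    rcases eq_or_ne x 0 with rfl | hx
    · simp
    · simp [hx, mul_eq_right₀]
  rw [hset, Set.ncard_insert_of_notMem (by simp [mem_nthRootsFinset hq1, hq1.ne']),
    Set.ncard_coe_finset, card_nthRootsFinset_one hq, hsucc]

theorem AddMonoidHom.ncard_fiber_eq_zero_or_eq_ncard_ker {G H : Type*} [AddGroup G]
    [AddGroup H] (φ : G →+ H) (b : H) :
    {x | φ x = b}.ncard = 0 ∨ {x | φ x = b}.ncard = (φ.ker : Set G).ncard := by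
  rcases Set.eq_empty_or_nonempty {x | φ x = b} with h | ⟨x₀, hx₀ : φ x₀ = b⟩
  · exact .inl (by rw [h, Set.ncard_empty])
  · have hcoset : {x | φ x = b} = (x₀ + ·) '' φ.ker := by
      ext x
      refine ⟨fun (hx : φ x = b) => ⟨-x₀ + x, ?_, add_neg_cancel_left x₀ x⟩, ?_⟩
      · rw [SetLike.mem_coe, AddMonoidHom.mem_ker, map_add, map_neg, hx, hx₀, neg_add_cancel]
      · rintro ⟨y, hy, rfl⟩
        rw [SetLike.mem_coe, AddMonoidHom.mem_ker] at hy
        rw [Set.mem_ofPred_eq, map_add, hx₀, hy, add_zero]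
    rw [hcoset, Set.ncard_image_of_injective _ (add_right_injective x₀)]
    exact .inr rfl

theorem eq_zero_of_add_mul_eq_zero_of_map_eq_self {K : Type*} [Field K] (σ : K →+* K)
    {u v d : K} (hu : σ u = u) (hv : σ v = v) (hd : σ d ≠ d) (h : u + d * v = 0) : v = 0 := by
  have hσ : u + σ d * v = 0 := by simpa [hu, hv] using congrArg σ h
  have : (d - σ d) * v = 0 := by linear_combination h - hσ
  exact (mul_eq_zero.mp this).resolve_left (sub_ne_zero.mpr hd.symm)

theorem div_pow_eq_self_iff {K : Type*} [Field K] {x a : K} (ha : a ≠ 0) (r : ℕ) :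
    (x / a) ^ r = x / a ↔ x * a ^ r = x ^ r * a := by
  rw [div_pow, div_eq_div_iff (pow_ne_zero r ha) ha]
  constructor <;> intro h <;> linear_combination -h

def budaghyanCarlet {K : Type*} [CommRing K] (r s : ℕ) (c d x : K) : K :=
  x * (x ^ s + x ^ r + c * x ^ (r * s)) + x ^ s * (c ^ r * x ^ r + d * x ^ (r * s))
    + x ^ ((s + 1) * r)

section BudaghyanCarlet

variable {K : Type*} [Field K] [CharP K 2] (m n : ℕ) (c d : K)

local notation "r" => 2 ^ m
local notation "s" => 2 ^ n

theorem budaghyanCarlet_polar (hK : ∀ u : K, (u ^ r) ^ r = u) (x a : K) :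
    budaghyanCarlet r s c d (x + a) + budaghyanCarlet r s c d x + budaghyanCarlet r s c d a =
      (x ^ s * a + x * a ^ s + c * (x * (a ^ s) ^ r + a * (x ^ s) ^ r))
        + (x ^ s * a + x * a ^ s + c * (x * (a ^ s) ^ r + a * (x ^ s) ^ r)) ^ r
        + (x * a ^ r + x ^ r * a) + d * (x * a ^ r + x ^ r * a) ^ s := by
  simp only [budaghyanCarlet, mul_comm r s, pow_mul, add_mul, one_mul, pow_add,
    add_pow_char_pow, mul_pow, hK, pow_right_comm _ (2 ^ m) (2 ^ n)]
  -- `A = B` iff `A + B = 0`, and every coefficient of `A + B` is even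
  rw [← CharTwo.add_eq_zero]
  ring_nf
  simp only [CharTwo.two_eq_zero, mul_zero, add_zero]

theorem budaghyanCarlet_polar_add (hK : ∀ u : K, (u ^ r) ^ r = u) (a x y : K) :
    budaghyanCarlet r s c d (x + y + a) + budaghyanCarlet r s c d (x + y)
        + budaghyanCarlet r s c d a =
      (budaghyanCarlet r s c d (x + a) + budaghyanCarlet r s c d x + budaghyanCarlet r s c d a)
        + (budaghyanCarlet r s c d (y + a) + budaghyanCarlet r s c d y
          + budaghyanCarlet r s c d a) := by
  simp only [budaghyanCarlet_polar m n c d hK, add_pow_char_pow, mul_pow]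
  ring

theorem budaghyanCarlet_polar_mul_self (hK : ∀ u : K, (u ^ r) ^ r = u) {a y : K}
    (hy : a ^ r = y * a) {l : K} (hl : l ^ r = l) :
    budaghyanCarlet r s c d (l * a + a) + budaghyanCarlet r s c d (l * a)
        + budaghyanCarlet r s c d a =
      (l ^ s + l) * (a * a ^ s) * (y ^ (s + 1) + c * y ^ s + c ^ r * y + 1) := by
  rw [budaghyanCarlet_polar m n c d hK]
  simp only [add_pow_char_pow, mul_pow, hK]
  simp only [pow_right_comm _ (2 ^ n) (2 ^ m), hl, hy, mul_pow]
  rw [← CharTwo.add_eq_zero]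
  ring_nf
  simp only [CharTwo.two_eq_zero, mul_zero, add_zero]

theorem eq_mul_of_budaghyanCarlet_polar_eq_zero (hK : ∀ u : K, (u ^ r) ^ r = u)
    (hd : d ^ r ≠ d) {a x : K} (ha : a ≠ 0)
    (h : budaghyanCarlet r s c d (x + a) + budaghyanCarlet r s c d x
      + budaghyanCarlet r s c d a = 0) :
    ∃ l : K, l ^ r = l ∧ l * a = x := by
  set σ := iterateFrobenius K 2 m
  set T := x ^ s * a + x * a ^ s + c * (x * (a ^ s) ^ r + a * (x ^ s) ^ r)
  set Q := x * a ^ r + x ^ r * a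
  have hQ : σ Q = Q := by
    simp only [σ, Q, iterateFrobenius_def, add_pow_char_pow, mul_pow, hK]
    exact add_comm _ _
  have hQs : σ (Q ^ s) = Q ^ s := by rw [map_pow, hQ]
  have hTQ : σ (T + T ^ r + Q) = T + T ^ r + Q := by
    rw [map_add, map_add, hQ]
    simp only [σ, iterateFrobenius_def, hK, add_comm (T ^ r) T]
  rw [budaghyanCarlet_polar m n c d hK] at h
  have hQ0 : Q = 0 := pow_eq_zero_iff (pow_ne_zero n two_ne_zero) |>.mp <|
    eq_zero_of_add_mul_eq_zero_of_map_eq_self σ hTQ hQs hd h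
  exact ⟨x / a, (div_pow_eq_self_iff ha _).mpr (CharTwo.add_eq_zero.mp hQ0),
    div_mul_cancel₀ x ha⟩

theorem budaghyanCarlet_polar_eq_zero_iff (hK : ∀ u : K, (u ^ r) ^ r = u) (hd : d ^ r ≠ d)
    (hc : ∀ y : K, y ^ (r + 1) = 1 → y ^ (s + 1) + c * y ^ s + c ^ r * y + 1 ≠ 0)
    {a : K} (ha : a ≠ 0) (x : K) :
    budaghyanCarlet r s c d (x + a) + budaghyanCarlet r s c d x + budaghyanCarlet r s c d a = 0 ↔
      ∃ l : K, (l ^ r = l ∧ l ^ s = l) ∧ l * a = x := by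
  set y := a ^ r / a
  have hy : a ^ r = y * a := (div_mul_cancel₀ _ ha).symm
  have hy1 : y ^ (r + 1) = 1 := by
    have := hK a
    rw [hy, mul_pow, hy, ← mul_assoc, ← pow_succ] at this
    exact (mul_eq_right₀ ha).mp this
  constructor
  · intro h
    obtain ⟨l, hl, rfl⟩ := eq_mul_of_budaghyanCarlet_polar_eq_zero m n c d hK hd ha h
    rw [budaghyanCarlet_polar_mul_self m n c d hK hy hl] at h
    simpa [hl, ha, hc y hy1, CharTwo.add_eq_zero] using h
  · rintro ⟨l, ⟨hlr, hls⟩, rfl⟩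
    rw [budaghyanCarlet_polar_mul_self m n c d hK hy hlr, hls, CharTwo.add_self_eq_zero,
      zero_mul, zero_mul]

end BudaghyanCarlet

theorem stmt16_general (m n : ℕ)
    (K : Type) [Field K] [Fintype K] (hcard : Fintype.card K = 2 ^ (2 * m))
    (c d : K) (hd : d ^ (2 ^ m) ≠ d)
    (hc : ∀ y : K, y ^ (2 ^ m + 1) = 1 →
      y ^ (2 ^ n + 1) + c * y ^ (2 ^ n) + c ^ (2 ^ m) * y + 1 ≠ 0) :
    let r := 2 ^ m; let s := 2 ^ n
    let F : K → K := fun x =>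
      x * (x ^ s + x ^ r + c * x ^ (r * s)) + x ^ s * (c ^ r * x ^ r + d * x ^ (r * s))
        + x ^ ((s + 1) * r)
    ∀ a : K, a ≠ 0 → ∀ b : K,
      {x : K | F (x + a) + F x = b}.ncard = 0 ∨
        {x : K | F (x + a) + F x = b}.ncard = 2 ^ Nat.gcd m n := by
  intro r s F a ha b
  have : CharP K 2 := charP_of_card_eq_prime_pow hcard
  have hK : ∀ u : K, (u ^ 2 ^ m) ^ 2 ^ m = u := fun u => by
    rw [← pow_mul, ← pow_add, ← two_mul, ← hcard, FiniteField.pow_card]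
  let φ : K →+ K := AddMonoidHom.mk' (fun x => F (x + a) + F x + F a)
    (budaghyanCarlet_polar_add m n c d hK a)
  have hfiber : {x | F (x + a) + F x = b} = {x | φ x = b + F a} := by
    ext x
    exact (add_left_inj (F a)).symm
  have hker : (φ.ker : Set K) = (· * a) '' {l | l ^ 2 ^ Nat.gcd m n = l} := by
    ext x
    simp only [SetLike.mem_coe, AddMonoidHom.mem_ker, Set.mem_image, Set.mem_ofPred_eq,
      ← pow_pow_eq_self_and_iff_gcd]
    exact budaghyanCarlet_polar_eq_zero_iff m n c d hK hd hc ha x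
  have hcard_ker : (φ.ker : Set K).ncard = 2 ^ Nat.gcd m n := by
    rw [hker, Set.ncard_image_of_injective _ (mul_left_injective₀ ha)]
    refine FiniteField.ncard_setOf_pow_eq_self ?_
    rw [hcard]
    exact Nat.pow_sub_one_dvd_pow_sub_one 2 ((Nat.gcd_dvd_left m n).mul_left 2)
  rw [hfiber, ← hcard_ker]
  exact φ.ncard_fiber_eq_zero_or_eq_ncard_ker _

/-- Theorem 1 (Budaghyan–Carlet): if `y^{s+1} + c y^s + c^r y + 1` has no root in
`μ_{r+1}`, then every equation `F(x+a) + F(x) = b` with `a ≠ 0` has `0` or `2^{gcd(m,n)}`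
solutions. -/
theorem stmt16 (m n : ℕ) (hm : 1 ≤ m) (hn : 1 ≤ n)
    (K : Type) [Field K] [Fintype K] (hcard : Fintype.card K = 2 ^ (2 * m))
    (c d : K) (hd : d ^ (2 ^ m) ≠ d)
    (hc : ∀ y : K, y ^ (2 ^ m + 1) = 1 →
      y ^ (2 ^ n + 1) + c * y ^ (2 ^ n) + c ^ (2 ^ m) * y + 1 ≠ 0) :
    let r := 2 ^ m; let s := 2 ^ n
    let F : K → K := fun x =>
      x * (x ^ s + x ^ r + c * x ^ (r * s)) + x ^ s * (c ^ r * x ^ r + d * x ^ (r * s))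
        + x ^ ((s + 1) * r)
    ∀ a : K, a ≠ 0 → ∀ b : K,
      {x : K | F (x + a) + F x = b}.ncard = 0 ∨
        {x : K | F (x + a) + F x = b}.ncard = 2 ^ Nat.gcd m n :=
  stmt16_general m n K hcard c d hd hc
end

section
/- Lemma 2: Let r = 2^m, s = 2^n with m dividing n, let c ∈ F_{r^2} be arbitrary and d ∈ F_{r^2} \ F_r. Then for every nonzero a ∈ F_{r^2}, the map x ↦ F(x+a) + F(x) is an r-to-one mapping from F_{r^2} to its image; equivalently, the kernel of G_a(x) = F(ax) + F(ax+a) + F(a) is exactly F_r. -/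
/-- Lemma 2: if `m ∣ n`, then for any `c` and any `d ∉ F_r`, the kernel of `G_a` is
exactly `F_r`, for every nonzero `a`. -/
theorem stmt17 (m n : ℕ) (hm : 1 ≤ m) (hn : 1 ≤ n) (hmn : m ∣ n)
    (K : Type) [Field K] [Fintype K] (hcard : Fintype.card K = 2 ^ (2 * m))
    (c d : K) (hd : d ^ (2 ^ m) ≠ d) (a : K) (ha : a ≠ 0) :
    let r := 2 ^ m; let s := 2 ^ n
    let F : K → K := fun x =>
      x * (x ^ s + x ^ r + c * x ^ (r * s)) + x ^ s * (c ^ r * x ^ r + d * x ^ (r * s))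
        + x ^ ((s + 1) * r)
    let G : K → K := fun x => F (a * x) + F (a * x + a) + F a
    {x : K | G x = 0} = {x : K | x ^ r = x} := by
  intro r s F G
  haveI : Fact (Nat.Prime 2) := ⟨Nat.prime_two⟩
  haveI hp2 : CharP K 2 := by
    have h2 : (2 : ℕ) ∣ ringChar K := by
      rw [prime_dvd_char_iff_dvd_card, hcard]
      exact dvd_pow_self 2 (by omega)
    have hp : (ringChar K).Prime := CharP.char_is_prime K _
    have : ringChar K = 2 := ((Nat.prime_dvd_prime_iff_eq Nat.prime_two hp).mp h2).symm
    rw [← this]; exact ringChar.charP K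
  have h2 : (2 : K) = 0 := by exact_mod_cast CharP.cast_eq_zero K 2
  -- basic power facts
  have hcardpow : ∀ y : K, y ^ (2 ^ (2 * m)) = y := fun y => by
    rw [← hcard]; exact FiniteField.pow_card y
  have hrr : ∀ y : K, (y ^ r) ^ r = y := fun y => by
    rw [← pow_mul, ← pow_add, show m + m = 2 * m by ring, hcardpow]
  have heven : ∀ t : ℕ, ∀ y : K, y ^ (2 ^ (2 * m * t)) = y := by
    intro t
    induction t with
    | zero => intro y; simp
    | succ t ih =>
      intro y
      rw [show 2 * m * (t + 1) = 2 * m * t + 2 * m by ring, pow_add, pow_mul, ih, hcardpow]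
  have hfrob : ∀ y z : K, (y + z) ^ r = y ^ r + z ^ r := fun y z =>
    add_pow_char_pow y z 2 m
  have hs : (∀ y : K, y ^ s = y) ∨ (∀ y : K, y ^ s = y ^ r) := by
    obtain ⟨k, rfl⟩ := hmn
    rcases Nat.even_or_odd k with ⟨t, rfl⟩ | ⟨t, rfl⟩
    · left; intro y
      show y ^ 2 ^ (m * (t + t)) = y
      rw [show m * (t + t) = 2 * m * t by ring, heven]
    · right; intro y
      show y ^ 2 ^ (m * (2 * t + 1)) = y ^ r
      rw [show m * (2 * t + 1) = m + 2 * m * t by ring, pow_add, pow_mul', heven]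
  have har : a ^ r ≠ 0 := pow_ne_zero r ha
  ext x
  show G x = 0 ↔ x ^ r = x
  rcases hs with hs | hs
  · -- even case : y ^ s = y
    have key : G x = (1 + c + c ^ r + d) * (a * a ^ r) * (x + x ^ r) := by
      simp only [G, F]
      simp only [pow_mul, pow_succ, pow_mul', hs, hfrob, mul_pow, hrr]
      linear_combination ((a^r)^2 + x^r*(a^r)^2 + (x^r)^2*(a^r)^2 + a*a^r*(1+d+c^r+c)
        + a^2 + a*x*x^r*a^r*(1+d+c^r+c) + x*a^2 + x^2*a^2) * h2
    have hEne : (1 + c + c ^ r + d) ≠ 0 := by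
      intro hE0
      apply hd
      have h1 : d = 1 + c + c ^ r := by linear_combination hE0 - (1 + c + c ^ r) * h2
      show d ^ r = d
      rw [h1, hfrob, hfrob, one_pow, hrr]
      ring
    have hEa : (1 + c + c ^ r + d) * (a * a ^ r) ≠ 0 :=
      mul_ne_zero hEne (mul_ne_zero ha har)
    rw [key, mul_eq_zero]
    constructor
    · rintro (h | h)
      · exact absurd h hEa
      · linear_combination h - x * h2
    · intro h; right; linear_combination h + x * h2
  · -- odd case : y ^ s = y ^ r
    have key : G x = (1 + d) * (a * a ^ r) * (x + x ^ r) := by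
      simp only [G, F]
      simp only [pow_mul, pow_succ, pow_mul', hs, hfrob, mul_pow, hrr]
      linear_combination (c^r*(a^r)^2*(1 + x^r + (x^r)^2) + 3*a*a^r + a*a^r*d
        + a*x^r*a^r + c*a^2 + x*a*a^r + 3*x*a*x^r*a^r + x*a*x^r*a^r*d + x*c*a^2
        + x^2*c*a^2) * h2
    have hEne : (1 + d) ≠ 0 := by
      intro hE0
      apply hd
      have h1 : d = 1 := by linear_combination hE0 - h2
      show d ^ r = d
      rw [h1, one_pow]
    have hEa : (1 + d) * (a * a ^ r) ≠ 0 :=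
      mul_ne_zero hEne (mul_ne_zero ha har)
    rw [key, mul_eq_zero]
    constructor
    · rintro (h | h)
      · exact absurd h hEa
      · linear_combination h - x * h2
    · intro h; right; linear_combination h + x * h2
end

section
/- Theorem 3: For all r = 2^m, s = 2^n with m, n ≥ 1, and for every d ∈ F_{r^2} \ F_r, there exists c ∈ F_{r^2} such that for every nonzero a ∈ F_{r^2}, the map x ↦ F(x+a) + F(x) is 2^k-to-one on F_{r^2}, where k = gcd(m,n) and F(x) = x(x^s + x^r + c x^{rs}) + x^s(c^r x^r + d x^{rs}) + x^{(s+1)r}. -/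
/-!
Write `r = 2^m`, `s = 2^n`, `K = 𝔽_{r²}` and `Tr y = y + y^r`. Every exponent of `F` is a sum
of two powers of `2`, so `F (x + a) + F x = L_a x + F a` with `L_a` additive, and each nonempty
fiber of the derivative has `|ker L_a|` elements. Explicitly `L_a x = P x + d · Tr(x a^r)^s`
with `P x, Tr(x a^r) ∈ 𝔽_r`; as `d ∉ 𝔽_r`, a kernel element has `Tr(x a^r) = 0`, i.e. `x = μ a`
with `μ ∈ 𝔽_r`, and then `L_a (μ a) = (μ + μ^s) G_c(a)`, `G_c(a) = Tr(a^(s+1) + c a^(rs+1))`.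
If `m ∣ n`, every `μ ∈ 𝔽_r` has `μ^s = μ`; otherwise `c` is chosen with `G_c(a) ≠ 0` for all
`a ≠ 0`. Either way `ker L_a = a · 𝔽_{2^k}`.

Since `G_c(a) = a^(s+1) h_c(a^(r-1))` with `h_c z = z^(s+1) + c z^s + c^r z + 1`, a good `c` is
one for which `h_c` has no zero on the unit circle `U = {z | z^(r+1) = 1}`. If there were none,
double counting the pairs `(c, z)` with `h_c z = 0` gives at most `r (r+1)` of them (`h_c z`
has degree `r` in `c`), but at least `r² + 2(r+1) - gcd(r+1, s-1) - gcd(r+1, s+1)`: all of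
`𝔽_r` has the root `1`, each `z ∈ U` with `z^s ≠ z` is a root for some `c ∈ 𝔽_r`, and each
`c ∈ U` with `c^(s+1) ≠ 1` has the two roots `c` and `w`, where `w^s = c^r`. Then one of the two
gcds is `r + 1`, so `2^m + 1 ∣ 4^n - 1`, which forces `m ∣ n`.
-/

open Finset Polynomial

theorem Nat.dvd_of_two_pow_add_one_dvd {m n : ℕ} (hm : m ≠ 0)
    (h : 2 ^ m + 1 ∣ 2 ^ (2 * n) - 1) : m ∣ n := by
  have hm' : 2 ^ m + 1 ∣ 2 ^ (2 * m) - 1 :=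
    ⟨2 ^ m - 1, by rw [mul_comm 2, pow_mul, ← one_pow 2, Nat.sq_sub_sq, one_pow]⟩
  have hk : 2 ^ m + 1 ∣ 2 ^ (2 * Nat.gcd m n) - 1 := by
    rw [← Nat.gcd_mul_left, ← Nat.pow_sub_one_gcd_pow_sub_one]
    exact Nat.dvd_gcd hm' h
  have hlt : m < 2 * Nat.gcd m n := by
    have h2k := Nat.one_lt_two_pow (Nat.mul_ne_zero two_ne_zero (Nat.gcd_ne_zero_left (n := n) hm))
    have := Nat.le_of_dvd (Nat.sub_pos_of_lt h2k) hk
    exact (Nat.pow_lt_pow_iff_right (by norm_num : 1 < 2)).mp (by omega)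
  rw [← Nat.gcd_eq_left_iff_dvd]
  obtain ⟨j, hj⟩ := Nat.gcd_dvd_left m n
  rcases j with _ | _ | j
  · omega
  · omega
  · nlinarith

theorem Nat.eq_or_eq_of_coprime_of_le_add {g h N : ℕ} (hN : N ≠ 0) (hg : g ∣ N) (hh : h ∣ N)
    (hgh : g.Coprime h) (hle : N + 1 ≤ g + h) : g = N ∨ h = N := by
  have hN' := Nat.pos_of_ne_zero hN
  have hprod := Nat.le_of_dvd hN' (hgh.mul_dvd_of_dvd_of_dvd hg hh)
  have hgN := Nat.le_of_dvd hN' hg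
  have hhN := Nat.le_of_dvd hN' hh
  rcases Nat.eq_or_lt_of_le (Nat.pos_of_dvd_of_pos hg hN') with rfl | hg1
  · right; omega
  · left; nlinarith [Nat.pos_of_dvd_of_pos hh hN']

theorem Nat.dvd_of_le_gcd_add_gcd {m n : ℕ} (hm : m ≠ 0) (hn : n ≠ 0)
    (h : 2 ^ m + 2 ≤ Nat.gcd (2 ^ m + 1) (2 ^ n - 1) + Nat.gcd (2 ^ m + 1) (2 ^ n + 1)) :
    m ∣ n := by
  have hcop : Nat.Coprime (2 ^ n - 1) (2 ^ n + 1) := by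
    rw [show 2 ^ n + 1 = 2 + (2 ^ n - 1) by have := Nat.one_le_two_pow (n := n); omega,
      Nat.coprime_add_self_right, Nat.coprime_two_right]
    exact Nat.Even.sub_odd Nat.one_le_two_pow ((Nat.even_pow' hn).mpr even_two) odd_one
  have hgcd := Nat.eq_or_eq_of_coprime_of_le_add (Nat.add_one_ne_zero _) (Nat.gcd_dvd_left _ _)
    (Nat.gcd_dvd_left _ _) (Nat.Coprime.coprime_dvd_left (Nat.gcd_dvd_right _ _)
      (Nat.Coprime.coprime_dvd_right (Nat.gcd_dvd_right _ _) hcop)) h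
  apply Nat.dvd_of_two_pow_add_one_dvd hm
  rw [mul_comm, pow_mul, ← one_pow 2, Nat.sq_sub_sq, one_pow]
  rcases hgcd with hg | hg
  · have hdvd := Nat.gcd_dvd_right (2 ^ m + 1) (2 ^ n - 1)
    rw [hg] at hdvd
    exact hdvd.mul_left _
  · have hdvd := Nat.gcd_dvd_right (2 ^ m + 1) (2 ^ n + 1)
    rw [hg] at hdvd
    exact hdvd.mul_right _

theorem pow_pow_gcd_eq_self_iff {G₀ : Type*} [GroupWithZero G₀] {b : ℕ} (hb : 0 < b)
    (m n : ℕ) (x : G₀) : x ^ b ^ Nat.gcd m n = x ↔ x ^ b ^ m = x ∧ x ^ b ^ n = x := by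
  rcases eq_or_ne x 0 with rfl | hx
  · simp [zero_pow (pow_pos hb _).ne']
  have key : ∀ j, x ^ b ^ j = x ↔ x ^ (b ^ j - 1) = 1 := fun j => by
    rw [← pow_sub_one_mul (pow_pos hb j).ne', mul_eq_right₀ hx]
  rw [key, key, key, ← Nat.pow_sub_one_gcd_pow_sub_one, pow_gcd_eq_one]

theorem RingHom.eq_zero_of_add_mul_eq_zero {K : Type*} [Field K] (σ : K →+* K) {p w d : K}
    (hp : σ p = p) (hw : σ w = w) (hd : σ d ≠ d) (h : p + d * w = 0) : w = 0 := by
  have h' : p + σ d * w = 0 := by simpa [hp, hw] using congrArg σ h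
  exact (mul_eq_zero.mp (show (σ d - d) * w = 0 by linear_combination h' - h)).resolve_left
    (sub_ne_zero.mpr hd)

theorem card_filter_pow_eq_one_le {R : Type*} [CommRing R] [IsDomain R] [Fintype R]
    [DecidableEq R] {t : ℕ} (ht : 0 < t) : #{x : R | x ^ t = 1} ≤ t := by
  have : univ.filter (fun x : R => x ^ t = 1) = nthRootsFinset t (1 : R) := by
    ext; simp [mem_nthRootsFinset ht]
  rw [this, nthRootsFinset_def]
  exact (Multiset.toFinset_card_le _).trans (card_nthRoots t 1)

namespace FiniteField

variable {K : Type*} [Field K] [Fintype K] [DecidableEq K]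

theorem card_filter_pow_eq_one {t : ℕ} (ht : t ∣ Fintype.card K - 1) :
    #{x : K | x ^ t = 1} = t := by
  have hq : 0 < Fintype.card K - 1 := by have := Fintype.one_lt_card (α := K); omega
  obtain ⟨g, hg⟩ := IsCyclic.exists_ofOrder_eq_natCard (α := Kˣ)
  rw [Nat.card_eq_fintype_card, Fintype.card_units] at hg
  have hζ : IsPrimitiveRoot ((g ^ ((Fintype.card K - 1) / t) : Kˣ) : K) t := by
    have hord : orderOf (g ^ ((Fintype.card K - 1) / t)) = t := by
      rw [← hg]; exact orderOf_pow_orderOf_div (by omega) (hg ▸ ht)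
    have := IsPrimitiveRoot.orderOf (g ^ ((Fintype.card K - 1) / t))
    rw [hord] at this
    exact IsPrimitiveRoot.coe_units_iff.mpr this
  convert hζ.card_nthRootsFinset using 2
  ext; simp [mem_nthRootsFinset (Nat.pos_of_dvd_of_pos ht hq)]

theorem card_filter_pow_eq_self {t : ℕ} (ht : 1 < t) (h : t - 1 ∣ Fintype.card K - 1) :
    #{x : K | x ^ t = x} = t := by
  have hset : univ.filter (fun x : K => x ^ t = x)
      = insert 0 (univ.filter fun x : K => x ^ (t - 1) = 1) := by
    ext x
    simp only [mem_filter, mem_univ, true_and, mem_insert]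
    rcases eq_or_ne x 0 with rfl | hx
    · simp [zero_pow (by omega : t ≠ 0)]
    · rw [← pow_sub_one_mul (by omega : t ≠ 0), mul_eq_right₀ hx]
      simp [hx]
  rw [hset, card_insert_of_notMem (by simp [zero_pow (by omega : t - 1 ≠ 0)]),
    card_filter_pow_eq_one h]
  omega

end FiniteField

theorem pow_two_pow_pow_two_pow {K : Type*} [Field K] [Fintype K] {m : ℕ}
    (hK : Fintype.card K = 2 ^ (2 * m)) (y : K) : (y ^ 2 ^ m) ^ 2 ^ m = y := by
  rw [← pow_mul, ← pow_add, ← two_mul, ← hK, FiniteField.pow_card]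

section UnitCircle

variable {K : Type*} [Field K] {m n : ℕ}

def circlePoly (r s : ℕ) (c z : K) : K := z ^ (s + 1) + c * z ^ s + c ^ r * z + 1

def fixedCoeff (s : ℕ) (z : K) : K := (z ^ (s + 1) + 1) / (z ^ s + z)

theorem fixedCoeff_mul [CharP K 2] {z : K} (hzs : z ^ 2 ^ n ≠ z) :
    fixedCoeff (2 ^ n) z * (z ^ 2 ^ n + z) = z ^ (2 ^ n + 1) + 1 :=
  div_mul_cancel₀ _ fun h => hzs (CharTwo.add_eq_zero.mp h)

theorem fixedCoeff_pow_two_pow [CharP K 2] {z : K} (hz : z ^ (2 ^ m + 1) = 1)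
    (hzs : z ^ 2 ^ n ≠ z) : fixedCoeff (2 ^ n) z ^ 2 ^ m = fixedCoeff (2 ^ n) z := by
  have hz0 : z ≠ 0 := by rintro rfl; simp at hz
  have hzr : z ^ 2 ^ m = z⁻¹ := eq_inv_of_mul_eq_one_left (by rwa [← pow_succ])
  have hc := fixedCoeff_mul hzs
  have hcr := congrArg (· ^ 2 ^ m) hc
  simp only [mul_pow, add_pow_char_pow, one_pow, pow_right_comm _ _ (2 ^ m), hzr, inv_pow,
    pow_succ] at hcr hc
  refine mul_right_cancel₀ (fun h => hzs (CharTwo.add_eq_zero.mp h)) ?_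
  have hu : z ^ 2 ^ n ≠ 0 := pow_ne_zero _ hz0
  generalize z ^ 2 ^ n = u at *
  rw [hc]
  field_simp at hcr
  linear_combination hcr

theorem circlePoly_fixedCoeff [CharP K 2] {z : K} (hz : z ^ (2 ^ m + 1) = 1)
    (hzs : z ^ 2 ^ n ≠ z) : circlePoly (2 ^ m) (2 ^ n) (fixedCoeff (2 ^ n) z) z = 0 := by
  rw [circlePoly, fixedCoeff_pow_two_pow hz hzs]
  linear_combination fixedCoeff_mul hzs
    + (z ^ (2 ^ n + 1) + 1) * (CharTwo.two_eq_zero : (2 : K) = 0)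

variable [Fintype K] [DecidableEq K]

theorem card_filter_circlePoly_eq_zero_le {r : ℕ} (hr : 1 < r) (s : ℕ) {z : K} (hz : z ≠ 0) :
    #{c : K | circlePoly r s c z = 0} ≤ r := by
  set p : K[X] := C z * X ^ r + C (z ^ s) * X + C (z ^ (s + 1) + 1)
  have hcoeff : p.coeff r = z := by
    simp only [p, coeff_add, coeff_C_mul_X_pow, coeff_C_mul_X, coeff_C, if_true,
      if_neg (by omega : r ≠ 1), if_neg (by omega : r ≠ 0), add_zero]
  have hp : p ≠ 0 := fun h => hz (by rw [← hcoeff, h, coeff_zero])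
  have hdeg : p.natDegree ≤ r := by
    simp only [p]; compute_degree; omega
  refine le_trans (card_le_degree_of_subset_roots fun c hc => ?_) hdeg
  rw [mem_roots hp, IsRoot, ← (mem_filter.mp hc).2]
  simp [p, circlePoly]; ring

def unitCircle (r : ℕ) : Finset K := {z | z ^ (r + 1) = 1}

def circleRoots (r s : ℕ) (c : K) : Finset K := {z ∈ unitCircle r | circlePoly r s c z = 0}

theorem mem_unitCircle {r : ℕ} {z : K} : z ∈ unitCircle r ↔ z ^ (r + 1) = 1 := by
  simp [unitCircle]

theorem mem_circleRoots {r s : ℕ} {c z : K} :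
    z ∈ circleRoots r s c ↔ z ^ (r + 1) = 1 ∧ circlePoly r s c z = 0 := by
  simp [circleRoots, unitCircle]

theorem sum_card_circleRoots_le {r : ℕ} (hr : 1 < r) (s : ℕ) :
    ∑ c : K, #(circleRoots r s c) ≤ #(unitCircle r : Finset K) * r := by
  calc ∑ c : K, #(circleRoots r s c)
      = ∑ z ∈ unitCircle r, #{c : K | circlePoly r s c z = 0} :=
        sum_card_bipartiteAbove_eq_sum_card_bipartiteBelow
          (r := fun (c z : K) => circlePoly r s c z = 0)
    _ ≤ ∑ z ∈ unitCircle r, r := sum_le_sum fun z hz => card_filter_circlePoly_eq_zero_le hr s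
        (by rintro rfl; simp [mem_unitCircle] at hz)
    _ = #(unitCircle r : Finset K) * r := by rw [sum_const, smul_eq_mul]

variable [CharP K 2]

theorem two_le_card_circleRoots {c : K} (hc : c ^ (2 ^ m + 1) = 1)
    (hcs : c ^ (2 ^ n + 1) ≠ 1) : 2 ≤ #(circleRoots (2 ^ m) (2 ^ n) c) := by
  have hinj : Function.Injective fun x : K => x ^ 2 ^ n := fun x y h =>
    (iterateFrobenius K 2 n).injective (by simpa only [iterateFrobenius_def] using h)
  -- the two roots are `c` and the `w` with `w ^ s = c ^ r`
  obtain ⟨w, hw⟩ := Finite.surjective_of_injective hinj (c ^ 2 ^ m)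
  simp only at hw
  have hwU : w ^ (2 ^ m + 1) = 1 := hinj (by
    simp only [one_pow]
    rw [pow_right_comm, hw, pow_right_comm, hc, one_pow])
  have hcw : c ≠ w := by
    rintro rfl
    exact hcs (by rw [pow_succ, hw, ← pow_succ, hc])
  have two : (2 : K) = 0 := CharTwo.two_eq_zero
  refine one_lt_card.mpr ⟨c, ?_, w, ?_, hcw⟩ <;> rw [mem_circleRoots, circlePoly]
  · exact ⟨hc, by linear_combination hc + (c ^ (2 ^ n + 1) + 1) * two⟩
  · exact ⟨hwU, by linear_combination (w + c) * hw + hc + (w * c ^ 2 ^ m + 1) * two⟩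

theorem card_add_card_le_sum_card_circleRoots_of_fixed :
    #{c : K | c ^ 2 ^ m = c} + #{z ∈ (unitCircle (2 ^ m) : Finset K) | z ^ 2 ^ n ≠ z}
      ≤ ∑ c ∈ {c : K | c ^ 2 ^ m = c}, #(circleRoots (2 ^ m) (2 ^ n) c) := by
  set F : Finset K := {c : K | c ^ 2 ^ m = c}
  set W : Finset K := {z ∈ (unitCircle (2 ^ m) : Finset K) | z ^ 2 ^ n ≠ z}
  have hW : ∀ z ∈ W, z ^ (2 ^ m + 1) = 1 ∧ z ^ 2 ^ n ≠ z := fun z hz => by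
    simpa [W, mem_unitCircle] using hz
  rw [card_eq_sum_card_fiberwise (s := W) (t := F) (f := fixedCoeff (2 ^ n)) fun z hz => by
      simpa [F] using fixedCoeff_pow_two_pow (hW z hz).1 (hW z hz).2,
    card_eq_sum_ones F, ← sum_add_distrib]
  refine sum_le_sum fun c hc => ?_
  have hcr : c ^ 2 ^ m = c := (mem_filter.mp hc).2
  rw [add_comm, ← card_insert_of_notMem (a := (1 : K)) (by simp [W])]
  refine card_le_card (insert_subset ?_ fun z hz => ?_)
  · rw [mem_circleRoots, circlePoly, hcr]
    refine ⟨by simp, ?_⟩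
    simp only [one_pow, mul_one]
    linear_combination (1 + c) * (CharTwo.two_eq_zero : (2 : K) = 0)
  · obtain ⟨hzW, rfl⟩ := mem_filter.mp hz
    exact mem_circleRoots.mpr ⟨(hW z hzW).1, circlePoly_fixedCoeff (hW z hzW).1 (hW z hzW).2⟩

theorem card_add_card_le_sum_card_circleRoots_of_not_fixed
    (hbad : ∀ c : K, (circleRoots (2 ^ m) (2 ^ n) c).Nonempty) :
    #{c : K | c ^ 2 ^ m ≠ c} + #{z ∈ (unitCircle (2 ^ m) : Finset K) | z ^ (2 ^ n + 1) ≠ 1}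
      ≤ ∑ c ∈ {c : K | c ^ 2 ^ m ≠ c}, #(circleRoots (2 ^ m) (2 ^ n) c) := by
  set F' : Finset K := {c : K | c ^ 2 ^ m ≠ c}
  set A : Finset K := {z ∈ (unitCircle (2 ^ m) : Finset K) | z ^ (2 ^ n + 1) ≠ 1}
  have hmemA : ∀ c ∈ A, c ^ (2 ^ m + 1) = 1 ∧ c ^ (2 ^ n + 1) ≠ 1 := fun c hc => by
    simpa [A, mem_unitCircle] using hc
  have hA : A ⊆ F' := fun c hc => mem_filter.mpr ⟨mem_univ c, fun hcr => by
    have hsq : c ^ 2 = 1 ^ 2 := by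
      rw [one_pow, sq]; nth_rw 1 [← hcr]; rw [← pow_succ, (hmemA c hc).1]
    exact (hmemA c hc).2 (by rw [CharTwo.sq_injective hsq, one_pow])⟩
  have hcardA : #A = ∑ c ∈ F', if c ∈ A then 1 else 0 := by
    rw [← card_filter, filter_mem_eq_inter, inter_eq_right.mpr hA]
  rw [hcardA, card_eq_sum_ones F', ← sum_add_distrib]
  refine sum_le_sum fun c _ => ?_
  split_ifs with hc
  · exact two_le_card_circleRoots (hmemA c hc).1 (hmemA c hc).2
  · exact card_pos.mpr (hbad c)

theorem two_pow_add_two_le_gcd_add_gcd (hK : Fintype.card K = 2 ^ (2 * m))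
    (hbad : ∀ c : K, (circleRoots (2 ^ m) (2 ^ n) c).Nonempty) :
    2 ^ m + 2 ≤ Nat.gcd (2 ^ m + 1) (2 ^ n - 1) + Nat.gcd (2 ^ m + 1) (2 ^ n + 1) := by
  have hm : m ≠ 0 := by rintro rfl; simpa [hK] using Fintype.one_lt_card (α := K)
  have hU : #(unitCircle (2 ^ m) : Finset K) ≤ 2 ^ m + 1 :=
    card_filter_pow_eq_one_le (Nat.succ_pos _)
  have hfix : #(unitCircle (2 ^ m) : Finset K)
      ≤ #{z ∈ (unitCircle (2 ^ m) : Finset K) | z ^ 2 ^ n ≠ z}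
        + Nat.gcd (2 ^ m + 1) (2 ^ n - 1) := by
    rw [← card_filter_add_card_filter_not (fun z => z ^ 2 ^ n = z), add_comm]
    refine Nat.add_le_add_left ((card_le_card fun z hz => ?_).trans
      (card_filter_pow_eq_one_le (Nat.gcd_pos_of_pos_left _ (Nat.succ_pos _)))) _
    simp only [mem_filter, mem_unitCircle, mem_univ, true_and] at hz ⊢
    have hz0 : z ≠ 0 := by rintro rfl; simp at hz
    refine pow_gcd_eq_one.mpr ⟨hz.1, ?_⟩
    rw [← mul_left_inj' hz0, ← pow_succ, Nat.sub_add_cancel Nat.one_le_two_pow, one_mul]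
    exact hz.2
  have hroot : #(unitCircle (2 ^ m) : Finset K)
      ≤ #{z ∈ (unitCircle (2 ^ m) : Finset K) | z ^ (2 ^ n + 1) ≠ 1}
        + Nat.gcd (2 ^ m + 1) (2 ^ n + 1) := by
    rw [← card_filter_add_card_filter_not (fun z => z ^ (2 ^ n + 1) = 1), add_comm]
    refine Nat.add_le_add_left ((card_le_card fun z hz => ?_).trans
      (card_filter_pow_eq_one_le (Nat.gcd_pos_of_pos_left _ (Nat.succ_pos _)))) _
    simp only [mem_filter, mem_unitCircle, mem_univ, true_and] at hz ⊢
    exact pow_gcd_eq_one.mpr hz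
  have hsplit : ∑ c ∈ {c : K | c ^ 2 ^ m = c}, #(circleRoots (2 ^ m) (2 ^ n) c)
      + ∑ c ∈ {c : K | c ^ 2 ^ m ≠ c}, #(circleRoots (2 ^ m) (2 ^ n) c)
      = ∑ c : K, #(circleRoots (2 ^ m) (2 ^ n) c) :=
    sum_filter_add_sum_filter_not _ _ _
  have hcard : #{c : K | c ^ 2 ^ m = c} + #{c : K | c ^ 2 ^ m ≠ c} = 2 ^ m * 2 ^ m := by
    rw [card_filter_add_card_filter_not, card_univ, hK, two_mul, pow_add]
  have key : 2 ^ m * 2 ^ m + 2 * #(unitCircle (2 ^ m) : Finset K)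
      ≤ #(unitCircle (2 ^ m) : Finset K) * 2 ^ m
        + Nat.gcd (2 ^ m + 1) (2 ^ n - 1) + Nat.gcd (2 ^ m + 1) (2 ^ n + 1) := by
    linarith [sum_card_circleRoots_le (K := K) (Nat.one_lt_two_pow hm) (2 ^ n),
      card_add_card_le_sum_card_circleRoots_of_fixed (K := K) (m := m) (n := n),
      card_add_card_le_sum_card_circleRoots_of_not_fixed hbad]
  obtain ⟨t, ht⟩ : ∃ t, 2 ^ m = t + 2 := ⟨2 ^ m - 2, by have := Nat.one_lt_two_pow hm; omega⟩
  rw [ht] at key hU ⊢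
  nlinarith [Nat.mul_le_mul_left t hU]

theorem exists_forall_circlePoly_ne_zero (hK : Fintype.card K = 2 ^ (2 * m)) (hmn : ¬ m ∣ n) :
    ∃ c : K, ∀ z : K, z ^ (2 ^ m + 1) = 1 → circlePoly (2 ^ m) (2 ^ n) c z ≠ 0 := by
  by_contra! hbad
  have hm : m ≠ 0 := by rintro rfl; simpa [hK] using Fintype.one_lt_card (α := K)
  have hn : n ≠ 0 := by rintro rfl; exact hmn (dvd_zero m)
  refine hmn (Nat.dvd_of_le_gcd_add_gcd hm hn (two_pow_add_two_le_gcd_add_gcd hK fun c => ?_))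
  obtain ⟨z, hz, hzc⟩ := hbad c
  exact ⟨z, mem_circleRoots.mpr ⟨hz, hzc⟩⟩

end UnitCircle

section DembowskiOstrom

variable {K : Type*} [Field K]

/-- The trace of `𝔽_{r²}` over `𝔽_r` when `K = 𝔽_{r²}`. -/
def relTrace (r : ℕ) (y : K) : K := y + y ^ r

/-- The map `F` of the theorem, for `r = 2^m` and `s = 2^n`. -/
def doMap (r s : ℕ) (c d x : K) : K :=
  x * (x ^ s + x ^ r + c * x ^ (r * s)) + x ^ s * (c ^ r * x ^ r + d * x ^ (r * s))
    + x ^ ((s + 1) * r)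

/-- The polarization `F (x + a) - F x - F a`, as `P x + d · Tr(x a^r)^s` with `P x ∈ 𝔽_r`. -/
def doDerivLin (r s : ℕ) (c d a x : K) : K :=
  relTrace r (x * a ^ s + x ^ s * a + x * a ^ r + c * (x * a ^ (r * s) + x ^ (r * s) * a))
    + d * relTrace r (x * a ^ r) ^ s

def doCoeff (r s : ℕ) (c a : K) : K := relTrace r (a ^ (s + 1) + c * a ^ (r * s + 1))

variable {m n : ℕ}

theorem relTrace_mul_of_pow_eq_self {r : ℕ} {μ : K} (hμ : μ ^ r = μ) (y : K) :
    relTrace r (μ * y) = μ * relTrace r y := by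
  rw [relTrace, relTrace, mul_pow, hμ]; ring

theorem relTrace_mul_mul_pow_two_pow [Fintype K] (hK : Fintype.card K = 2 ^ (2 * m))
    (μ a : K) : relTrace (2 ^ m) (μ * a * a ^ 2 ^ m) = relTrace (2 ^ m) μ * a ^ (2 ^ m + 1) := by
  rw [relTrace, relTrace, mul_pow, mul_pow, pow_two_pow_pow_two_pow hK]; ring

variable [CharP K 2]

theorem relTrace_add (x y : K) :
    relTrace (2 ^ m) (x + y) = relTrace (2 ^ m) x + relTrace (2 ^ m) y := by
  simp only [relTrace, add_pow_char_pow]; ring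

theorem relTrace_eq_zero_iff {μ : K} : relTrace (2 ^ m) μ = 0 ↔ μ ^ 2 ^ m = μ := by
  rw [relTrace, CharTwo.add_eq_zero, eq_comm]

variable (m n) in
theorem doDerivLin_add (c d a x y : K) :
    doDerivLin (2 ^ m) (2 ^ n) c d a (x + y)
      = doDerivLin (2 ^ m) (2 ^ n) c d a x + doDerivLin (2 ^ m) (2 ^ n) c d a y := by
  simp only [doDerivLin, relTrace, ← pow_add (2 : ℕ) m n, add_pow_char_pow, mul_pow]
  ring

variable [Fintype K]

theorem relTrace_pow_two_pow (hK : Fintype.card K = 2 ^ (2 * m)) (y : K) :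
    relTrace (2 ^ m) y ^ 2 ^ m = relTrace (2 ^ m) y := by
  rw [relTrace, add_pow_char_pow, pow_two_pow_pow_two_pow hK, add_comm]

theorem relTrace_pow_two_pow_add_one (hK : Fintype.card K = 2 ^ (2 * m)) (y : K) :
    relTrace (2 ^ m) (y ^ (2 ^ m + 1)) = 0 := by
  rw [relTrace, pow_succ, mul_pow, pow_two_pow_pow_two_pow hK, mul_comm y,
    CharTwo.add_self_eq_zero]

theorem doMap_add (hK : Fintype.card K = 2 ^ (2 * m)) (c d a x : K) :
    doMap (2 ^ m) (2 ^ n) c d (x + a)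
      = doMap (2 ^ m) (2 ^ n) c d x + doDerivLin (2 ^ m) (2 ^ n) c d a x
        + doMap (2 ^ m) (2 ^ n) c d a := by
  have hsr : ∀ y : K, y ^ ((2 ^ n + 1) * 2 ^ m) = (y ^ 2 ^ m) ^ 2 ^ n * y ^ 2 ^ m := fun y => by
    rw [add_one_mul, pow_add, pow_mul']
  simp only [doMap, doDerivLin, relTrace, pow_mul, hsr, add_pow_char_pow, mul_pow,
    pow_two_pow_pow_two_pow hK, pow_right_comm _ (2 ^ n) (2 ^ m)]
  ring

theorem doDerivLin_mul_self (hK : Fintype.card K = 2 ^ (2 * m)) {μ : K} (hμ : μ ^ 2 ^ m = μ)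
    (c d a : K) :
    doDerivLin (2 ^ m) (2 ^ n) c d a (μ * a)
      = (μ + μ ^ 2 ^ n) * doCoeff (2 ^ m) (2 ^ n) c a := by
  have harg : μ * a * a ^ 2 ^ n + (μ * a) ^ 2 ^ n * a + μ * a * a ^ 2 ^ m
      + c * (μ * a * a ^ (2 ^ m * 2 ^ n) + (μ * a) ^ (2 ^ m * 2 ^ n) * a)
      = (μ + μ ^ 2 ^ n) * (a ^ (2 ^ n + 1) + c * a ^ (2 ^ m * 2 ^ n + 1))
        + μ * a ^ (2 ^ m + 1) := by
    rw [mul_pow, mul_pow, pow_mul μ, hμ]; ring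
  have hμs : (μ + μ ^ 2 ^ n) ^ 2 ^ m = μ + μ ^ 2 ^ n := by
    rw [add_pow_char_pow, pow_right_comm, hμ]
  rw [doDerivLin, harg, relTrace_add, relTrace_mul_of_pow_eq_self hμs,
    relTrace_mul_of_pow_eq_self hμ, relTrace_pow_two_pow_add_one hK, mul_assoc, ← pow_succ',
    relTrace_mul_of_pow_eq_self hμ, relTrace_pow_two_pow_add_one hK]
  simp [doCoeff]

theorem doDerivLin_eq_zero_iff (hK : Fintype.card K = 2 ^ (2 * m)) {c d a : K}
    (hd : d ^ 2 ^ m ≠ d) (ha : a ≠ 0) {x : K} :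
    doDerivLin (2 ^ m) (2 ^ n) c d a x = 0 ↔
      ∃ μ : K, μ ^ 2 ^ m = μ ∧ (μ + μ ^ 2 ^ n) * doCoeff (2 ^ m) (2 ^ n) c a = 0 ∧ μ * a = x := by
  constructor
  · intro hx
    have hw := (iterateFrobenius K 2 m).eq_zero_of_add_mul_eq_zero
      (by rw [iterateFrobenius_def]; exact relTrace_pow_two_pow hK _)
      (by rw [iterateFrobenius_def, pow_right_comm, relTrace_pow_two_pow hK])
      (by rwa [iterateFrobenius_def]) hx
    have hxa : x / a * a = x := div_mul_cancel₀ x ha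
    have hμ : (x / a) ^ 2 ^ m = x / a := by
      rw [← relTrace_eq_zero_iff, ← mul_eq_zero_iff_right (pow_ne_zero (2 ^ m + 1) ha),
        ← relTrace_mul_mul_pow_two_pow hK, hxa]
      exact pow_eq_zero_iff (pow_ne_zero n two_ne_zero) |>.mp hw
    exact ⟨x / a, hμ, by rw [← doDerivLin_mul_self hK hμ, hxa, hx], hxa⟩
  · rintro ⟨μ, hμ, hG, rfl⟩
    rw [doDerivLin_mul_self hK hμ, hG]

theorem doDerivLin_eq_zero_iff_of_dvd_or (hK : Fintype.card K = 2 ^ (2 * m)) {c d a : K}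
    (hd : d ^ 2 ^ m ≠ d) (ha : a ≠ 0) (hc : m ∣ n ∨ doCoeff (2 ^ m) (2 ^ n) c a ≠ 0) {x : K} :
    doDerivLin (2 ^ m) (2 ^ n) c d a x = 0 ↔ ∃ μ : K, μ ^ 2 ^ Nat.gcd m n = μ ∧ μ * a = x := by
  rw [doDerivLin_eq_zero_iff hK hd ha]
  refine exists_congr fun μ => ?_
  rw [pow_pow_gcd_eq_self_iff two_pos, and_assoc]
  refine and_congr_right fun hμ => and_congr_left fun _ => ?_
  rcases hc with hmn | hG
  · have hμn : μ ^ 2 ^ n = μ :=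
      ((pow_pow_gcd_eq_self_iff two_pos m n μ).mp (by rwa [Nat.gcd_eq_left hmn])).2
    simp [hμn, CharTwo.add_self_eq_zero]
  · rw [mul_eq_zero, or_iff_left hG, CharTwo.add_eq_zero, eq_comm]

theorem ncard_fiber_doMap_add_add (hK : Fintype.card K = 2 ^ (2 * m)) {c d a b : K}
    (hd : d ^ 2 ^ m ≠ d) (ha : a ≠ 0) (hc : m ∣ n ∨ doCoeff (2 ^ m) (2 ^ n) c a ≠ 0)
    (hb : b ∈ Set.range fun x => doMap (2 ^ m) (2 ^ n) c d (x + a) + doMap (2 ^ m) (2 ^ n) c d x) :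
    {x | doMap (2 ^ m) (2 ^ n) c d (x + a) + doMap (2 ^ m) (2 ^ n) c d x = b}.ncard
      = 2 ^ Nat.gcd m n := by
  classical
  have hm : m ≠ 0 := by rintro rfl; simpa [hK] using Fintype.one_lt_card (α := K)
  let L : K →+ K := AddMonoidHom.mk' (doDerivLin (2 ^ m) (2 ^ n) c d a) (doDerivLin_add m n c d a)
  have hdiff : ∀ x, doMap (2 ^ m) (2 ^ n) c d (x + a) + doMap (2 ^ m) (2 ^ n) c d x
      = L x + doMap (2 ^ m) (2 ^ n) c d a := fun x => by
    rw [doMap_add hK, AddMonoidHom.mk'_apply]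
    linear_combination (doMap (2 ^ m) (2 ^ n) c d x) * (CharTwo.two_eq_zero : (2 : K) = 0)
  have hfiber : {x | doMap (2 ^ m) (2 ^ n) c d (x + a) + doMap (2 ^ m) (2 ^ n) c d x = b}
      = ↑(univ.filter fun x => L x = b + doMap (2 ^ m) (2 ^ n) c d a) := by
    ext x
    simp [hdiff, CharTwo.eq_add_iff_add_eq]
  have hrange : b + doMap (2 ^ m) (2 ^ n) c d a ∈ Set.range L := by
    obtain ⟨x, rfl⟩ := hb
    exact ⟨x, by simp [hdiff, CharTwo.add_cancel_right]⟩
  have hker : univ.filter (fun x => L x = 0)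
      = (univ.filter fun μ : K => μ ^ 2 ^ Nat.gcd m n = μ).image (· * a) := by
    ext x
    simp [L, doDerivLin_eq_zero_iff_of_dvd_or hK hd ha hc]
  rw [hfiber, Set.ncard_coe_finset,
    AddMonoidHom.card_fiber_eq_of_mem_range L hrange ⟨0, map_zero L⟩, hker,
    card_image_of_injective _ (mul_left_injective₀ ha)]
  convert FiniteField.card_filter_pow_eq_self (K := K) ?_ ?_
  · exact Nat.one_lt_two_pow (Nat.gcd_ne_zero_left hm)
  · rw [hK]
    exact Nat.pow_sub_one_dvd_pow_sub_one 2 ((Nat.gcd_dvd_left m n).mul_left 2)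

theorem doCoeff_eq_mul_circlePoly (hK : Fintype.card K = 2 ^ (2 * m)) (c a : K) :
    doCoeff (2 ^ m) (2 ^ n) c a
      = a ^ (2 ^ n + 1) * circlePoly (2 ^ m) (2 ^ n) c (a ^ (2 ^ m - 1)) := by
  have h1 : (a ^ (2 ^ m * 2 ^ n + 1)) ^ 2 ^ m = a ^ 2 ^ n * a ^ 2 ^ m := by
    rw [pow_succ, mul_pow, pow_mul, pow_right_comm, pow_two_pow_pow_two_pow hK]
  rw [doCoeff, relTrace, add_pow_char_pow, mul_pow, h1, circlePoly]
  obtain ⟨t, ht⟩ : ∃ t, 2 ^ m = t + 1 := ⟨2 ^ m - 1, by have := Nat.one_le_two_pow (n := m); omega⟩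
  rw [ht, Nat.add_sub_cancel]
  ring

theorem doCoeff_ne_zero (hK : Fintype.card K = 2 ^ (2 * m)) {c a : K}
    (hc : ∀ z : K, z ^ (2 ^ m + 1) = 1 → circlePoly (2 ^ m) (2 ^ n) c z ≠ 0) (ha : a ≠ 0) :
    doCoeff (2 ^ m) (2 ^ n) c a ≠ 0 := by
  rw [doCoeff_eq_mul_circlePoly hK]
  refine mul_ne_zero (pow_ne_zero _ ha) (hc _ ?_)
  have hexp : (2 ^ m - 1) * (2 ^ m + 1) = Fintype.card K - 1 := by
    rw [hK, mul_comm, ← Nat.sq_sub_sq, one_pow, ← pow_mul, mul_comm]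
  rw [← pow_mul, hexp, FiniteField.pow_card_sub_one_eq_one a ha]

end DembowskiOstrom

theorem stmt18_general (m n : ℕ)
    (K : Type) [Field K] [Fintype K] (hcard : Fintype.card K = 2 ^ (2 * m))
    (d : K) (hd : d ^ (2 ^ m) ≠ d) :
    ∃ c : K,
      let r := 2 ^ m; let s := 2 ^ n
      let F : K → K := fun x =>
        x * (x ^ s + x ^ r + c * x ^ (r * s)) + x ^ s * (c ^ r * x ^ r + d * x ^ (r * s))
          + x ^ ((s + 1) * r)
      ∀ a : K, a ≠ 0 → ∀ b : K, b ∈ Set.range (fun x => F (x + a) + F x) →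
        {x : K | F (x + a) + F x = b}.ncard = 2 ^ Nat.gcd m n := by
  classical
  have : CharP K 2 := charP_of_card_eq_prime_pow hcard
  obtain ⟨c, hc⟩ : ∃ c : K, m ∣ n ∨ ∀ a : K, a ≠ 0 → doCoeff (2 ^ m) (2 ^ n) c a ≠ 0 := by
    by_cases hmn : m ∣ n
    · exact ⟨0, .inl hmn⟩
    · obtain ⟨c, hc⟩ := exists_forall_circlePoly_ne_zero hcard hmn
      exact ⟨c, .inr fun a ha => doCoeff_ne_zero hcard hc ha⟩
  exact ⟨c, fun a ha b hb =>
    ncard_fiber_doMap_add_add hcard hd ha (hc.imp_right fun h => h a ha) hb⟩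

/-- Theorem 3: for all `m, n ≥ 1` and every `d ∉ F_r`, there exists `c ∈ F_{r^2}` such
that every nonzero derivative of `F` is a `2^{gcd(m,n)}`-to-one map on `F_{r^2}`. -/
theorem stmt18 (m n : ℕ) (hm : 1 ≤ m) (hn : 1 ≤ n)
    (K : Type) [Field K] [Fintype K] (hcard : Fintype.card K = 2 ^ (2 * m))
    (d : K) (hd : d ^ (2 ^ m) ≠ d) :
    ∃ c : K,
      let r := 2 ^ m; let s := 2 ^ n
      let F : K → K := fun x =>
        x * (x ^ s + x ^ r + c * x ^ (r * s)) + x ^ s * (c ^ r * x ^ r + d * x ^ (r * s))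
          + x ^ ((s + 1) * r)
      ∀ a : K, a ≠ 0 → ∀ b : K, b ∈ Set.range (fun x => F (x + a) + F x) →
        {x : K | F (x + a) + F x = b}.ncard = 2 ^ Nat.gcd m n :=
  stmt18_general m n K hcard d hd
end

section
/- Corollary: Let r = 2^m with m ≥ 1 and s = 2^n with gcd(m,n) = 1. Then there exist c ∈ F_{r^2} and d ∈ F_{r^2} \ F_r such that F(x) = x(x^s + x^r + c x^{rs}) + x^s(c^r x^r + d x^{rs}) + x^{(s+1)r} is almost perfect nonlinear on F_{r^2}: for every nonzero a and every b in F_{r^2}, the equation F(x+a) + F(x) = b has at most 2 solutions. -/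
/-!
`F` is quadratic: `F (x + a) + F x = B x a + F a` with `B · a` additive, so `F` is APN as soon
as `B · a` has kernel `{0, a}` for every `a ≠ 0`. Write `x̄ = x ^ q`. Then
`B + B̄ = (d + d̄) (z ā + a z̄) ^ s`, so for `d ∉ 𝔽_q` a kernel element is `z = λ a` with
`λ ∈ 𝔽_q`, and `B (λ a) a = (λ ^ s + λ) form c a`. As `gcd (m, n) = 1`, `λ ^ s = λ` forces
`λ ∈ 𝔽_2`; so it suffices that `form c` has no nonzero zero, and nothing is needed when `m = 1`.

For `m ≥ 2` take `δ̄ = δ + 1` and `c = 1 + γ δ` with `γ ∈ 𝔽_q`. In the `𝔽_q`-coordinates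
`e = a + ā`, `w = ā + e δ` of `a`, `form c a = γ G(w, e) + e ^ (s + 1)` where `G` dehomogenises
to `u ^ (s + 1) + A u + ν`, `A = δ ^ s + δ + 1`, `ν = δ ^ 2 + δ`. Hence `form c` has no nonzero
zero once `ν + γ⁻¹` is a value `≠ ν` that `u ↦ u ^ (s + 1) + A u` misses on `𝔽_q`. For `A ≠ 0`
this map has two collisions, `0 ~ A ^ (1/s)` and `z ~ λ z`, when `q ≥ 8`, and it misses `1`
when `q = 4`.
-/

open Finset Function Polynomial

section IteratedPow

variable {M : Type*} [Monoid M] {p : ℕ} {x : M}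

theorem isPeriodicPt_pow_iff {k : ℕ} : IsPeriodicPt (· ^ p) k x ↔ x ^ p ^ k = x := by
  rw [IsPeriodicPt, IsFixedPt, pow_iterate]

theorem pow_pow_gcd_eq_self {a b : ℕ} (ha : x ^ p ^ a = x) (hb : x ^ p ^ b = x) :
    x ^ p ^ a.gcd b = x :=
  isPeriodicPt_pow_iff.mp <| (isPeriodicPt_pow_iff.mpr ha).gcd (isPeriodicPt_pow_iff.mpr hb)

theorem pow_pow_mul_eq_self {a : ℕ} (ha : x ^ p ^ a = x) (k : ℕ) : x ^ p ^ (a * k) = x :=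
  isPeriodicPt_pow_iff.mp <| (isPeriodicPt_pow_iff.mpr ha).mul_const k

theorem exists_pow_pow_eq_of_pow_pow_eq_self {a : ℕ} (ha : a ≠ 0) (hx : x ^ p ^ a = x)
    (k : ℕ) : ∃ y, y ^ p ^ a = y ∧ y ^ p ^ k = x := by
  refine ⟨x ^ p ^ ((a - 1) * k), by rw [pow_right_comm, hx], ?_⟩
  rw [← pow_mul, ← pow_add, show (a - 1) * k + k = a * k by cases a <;> simp_all [add_mul],
    pow_pow_mul_eq_self hx]

end IteratedPow

theorem pow_two_pow_mul_add_mul_ne_one {F : Type*} [Field F] {n : ℕ} (hn : Odd n) {A w : F}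
    (hA : A ≠ 0) (hw : w ^ 2 ^ 2 = w) : w ^ 2 ^ n * w + A * w ≠ 1 := by
  rcases eq_or_ne w 0 with rfl | hw0
  · simp
  obtain ⟨k, rfl⟩ := hn
  have hw3 : w ^ 2 * w = 1 := mul_right_cancel₀ hw0 (by linear_combination hw)
  rw [pow_succ, pow_mul, pow_pow_mul_eq_self hw k, hw3]
  simpa using mul_ne_zero hA hw0

theorem Finset.image_erase_of_map_eq {α β : Type*} [DecidableEq α] [DecidableEq β]
    {f : α → β} {s : Finset α} {x y : α} (hy : y ∈ s) (hxy : x ≠ y) (h : f x = f y) :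
    (s.erase x).image f = s.image f := by
  refine (image_subset_image (erase_subset x s)).antisymm fun b hb => ?_
  obtain ⟨u, hu, rfl⟩ := mem_image.mp hb
  by_cases hux : u = x
  · exact mem_image.mpr ⟨y, mem_erase.mpr ⟨hxy.symm, hy⟩, by rw [hux, h]⟩
  · exact mem_image_of_mem f (mem_erase.mpr ⟨hux, hu⟩)

theorem AddMonoidHom.ncard_setOf_eq_le_two {G H : Type*} [AddGroup G] [AddGroup H] (f : G →+ H)
    {a : G} (hf : ∀ z, f z = 0 → z = 0 ∨ z = a) (b : H) : {x | f x = b}.ncard ≤ 2 := by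
  rcases Set.eq_empty_or_nonempty {x | f x = b} with h | ⟨x₀, hx₀⟩
  · simp [h]
  have hsub : {x | f x = b} ⊆ {x₀, a + x₀} := by
    intro x hx
    have : f (x - x₀) = 0 := by rw [map_sub, hx, hx₀, sub_self]
    rcases hf _ this with h | h
    · exact .inl (sub_eq_zero.mp h)
    · exact .inr (sub_eq_iff_eq_add.mp h)
  calc _ ≤ ({x₀, a + x₀} : Set G).ncard := Set.ncard_le_ncard hsub
    _ ≤ 2 := (Set.ncard_insert_le _ _).trans (by simp)

section FiniteField

variable {K : Type*} [Field K] [Fintype K]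

theorem card_filter_pow_eq_self_le [DecidableEq K] {N : ℕ} (hN : 1 < N) :
    #{x : K | x ^ N = x} ≤ N := by
  have hroots : ({x : K | x ^ N = x} : Finset K) = (X ^ N - X : K[X]).roots.toFinset := by
    ext x
    simp [mem_roots (FiniteField.X_pow_card_sub_X_ne_zero K hN), sub_eq_zero]
  rw [hroots]
  exact (Multiset.toFinset_card_le _).trans
    ((card_roots' _).trans (FiniteField.X_pow_card_sub_X_natDegree_eq K hN).le)

variable {p m : ℕ}

theorem pow_pow_pow_pow_eq_self (hcard : Fintype.card K = p ^ (2 * m)) (x : K) :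
    (x ^ p ^ m) ^ p ^ m = x := by
  rw [← pow_mul, ← pow_add, ← two_mul, ← hcard, FiniteField.pow_card]

variable [Fact p.Prime] [CharP K p] [DecidableEq K]

theorem card_filter_pow_pow_eq_self (hm : m ≠ 0) (hcard : Fintype.card K = p ^ (2 * m)) :
    #{x : K | x ^ p ^ m = x} = p ^ m := by
  have hp := (Fact.out : p.Prime).one_lt
  set f : K[X] := X ^ p ^ m - X
  have hdvd : f ∣ X ^ Fintype.card K - X := by
    have : X ^ Fintype.card K - X = f ^ p ^ m + f := by
      rw [sub_pow_char_pow, ← pow_mul, hcard, two_mul, pow_add]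
      ring
    rw [this]
    exact dvd_add (dvd_pow_self f (pow_ne_zero _ (by omega))) dvd_rfl
  have hK : Splits (X ^ Fintype.card K - X : K[X]) := by
    rw [splits_iff_card_roots, FiniteField.roots_X_pow_card_sub_X,
      FiniteField.X_pow_card_sub_X_natDegree_eq K Fintype.one_lt_card]
    rfl
  have hf : Splits f := hK.of_dvd (FiniteField.X_pow_card_sub_X_ne_zero K Fintype.one_lt_card) hdvd
  have hroots : ({x : K | x ^ p ^ m = x} : Finset K) = f.roots.toFinset := by
    ext x
    simp [f, mem_roots (FiniteField.X_pow_card_pow_sub_X_ne_zero K hm hp), sub_eq_zero]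
  rw [hroots, Multiset.toFinset_card_of_nodup
    (nodup_roots (galois_poly_separable p _ (dvd_pow_self p hm))), ← hf.natDegree_eq_card_roots,
    FiniteField.X_pow_card_pow_sub_X_natDegree_eq K hm hp]

theorem exists_pow_pow_eq_self_notMem (hm : m ≠ 0) (hcard : Fintype.card K = p ^ (2 * m))
    {t : Finset K} (ht : #t < p ^ m) : ∃ x, x ^ p ^ m = x ∧ x ∉ t := by
  obtain ⟨x, hx, hxt⟩ := exists_mem_notMem_of_card_lt_card
    (ht.trans_eq (card_filter_pow_pow_eq_self hm hcard).symm)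
  exact ⟨x, (mem_filter.mp hx).2, hxt⟩

end FiniteField

section CharTwo

variable {K : Type*} [Field K] [CharP K 2] {m n : ℕ}

theorem exists_pow_two_pow_eq_add_one [Fintype K] (hm : m ≠ 0)
    (hcard : Fintype.card K = 2 ^ (2 * m)) : ∃ δ : K, δ ^ 2 ^ m = δ + 1 := by
  classical
  obtain ⟨x, hx, hxF⟩ := exists_mem_notMem_of_card_lt_card (s := {x : K | x ^ 2 ^ m = x})
    (t := univ) (by
      rw [card_filter_pow_pow_eq_self hm hcard, card_univ, hcard]
      exact Nat.pow_lt_pow_right (by norm_num) (by omega))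
  have he : x + x ^ 2 ^ m ≠ 0 := mt CharTwo.add_eq_zero.mp (Ne.symm (by simpa using hxF))
  refine ⟨x / (x + x ^ 2 ^ m), ?_⟩
  rw [div_pow, add_pow_char_pow, pow_pow_pow_pow_eq_self hcard, add_comm _ x, div_add_one he,
    ← add_assoc, CharTwo.add_self_eq_zero, zero_add]

theorem exists_pow_two_pow_eq_self_mul_ne_one [Fintype K] (hm : 3 ≤ m)
    (hcard : Fintype.card K = 2 ^ (2 * m)) (hgcd : m.gcd n = 1) :
    ∃ l : K, l ^ 2 ^ m = l ∧ l ≠ 0 ∧ l ≠ 1 ∧ l ^ 2 ^ n * l ≠ 1 := by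
  classical
  obtain ⟨l, hl, hl4⟩ := exists_pow_pow_eq_self_notMem (t := {x : K | x ^ 2 ^ 2 = x}) (by omega)
    hcard ((card_filter_pow_eq_self_le (by norm_num)).trans_lt
      (Nat.pow_lt_pow_right (by norm_num) (by omega)))
  rw [mem_filter, not_and] at hl4
  replace hl4 := hl4 (mem_univ l)
  refine ⟨l, hl, fun h => hl4 (by simp [h]), fun h => hl4 (by simp [h]), fun h => hl4 ?_⟩
  have h2n : l ^ 2 ^ (2 * n) = l := by
    have hinv := eq_inv_of_mul_eq_one_left h
    rw [two_mul, pow_add, pow_mul, hinv, inv_pow, hinv, inv_inv]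
  have h2 := pow_pow_gcd_eq_self hl h2n
  rw [Nat.Coprime.gcd_mul_right_cancel_right 2 (Nat.coprime_comm.mp hgcd)] at h2
  obtain ⟨k, hk⟩ := Nat.gcd_dvd_right m 2
  simpa [← hk] using pow_pow_mul_eq_self h2 k

theorem exists_collision_mul (hm : m ≠ 0) {A l : K} (hA : A ^ 2 ^ m = A) (hA0 : A ≠ 0)
    (hl : l ^ 2 ^ m = l) (hl1 : l ≠ 1) (hls : l ^ 2 ^ n * l ≠ 1) :
    ∃ z : K, z ^ 2 ^ m = z ∧ z ≠ 0 ∧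
      z ^ 2 ^ n * z + A * z = (l * z) ^ 2 ^ n * (l * z) + A * (l * z) := by
  have hl1' : l + 1 ≠ 0 := mt CharTwo.add_eq_zero.mp hl1
  have hls' : l ^ 2 ^ n * l + 1 ≠ 0 := mt CharTwo.add_eq_zero.mp hls
  obtain ⟨z, hz, hzs⟩ := exists_pow_pow_eq_of_pow_pow_eq_self (p := 2)
    (x := A * (l + 1) / (l ^ 2 ^ n * l + 1)) hm (by
      rw [div_pow, mul_pow, add_pow_char_pow, add_pow_char_pow, mul_pow, pow_right_comm l, hA, hl,
        one_pow]) n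
  have hz0 : z ≠ 0 := by
    rintro rfl
    rw [zero_pow (by positivity)] at hzs
    exact div_ne_zero (mul_ne_zero hA0 hl1') hls' hzs.symm
  refine ⟨z, hz, hz0, ?_⟩
  rw [eq_div_iff hls'] at hzs
  rw [mul_pow]
  linear_combination (norm := ring_nf) z * hzs
  reduce_mod_char!

end CharTwo

namespace BudaghyanCarlet

section Identities

variable {R : Type*} [CommRing R]

def hexanomial (c d : R) (q s : ℕ) (x : R) : R :=
  x * (x ^ s + x ^ q + c * x ^ (q * s)) + x ^ s * (c ^ q * x ^ q + d * x ^ (q * s))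
    + x ^ ((s + 1) * q)

def polar (c d : R) (q s : ℕ) (z a : R) : R :=
  z * a ^ s + a * z ^ s + z * a ^ q + a * z ^ q + c * (z * (a ^ q) ^ s + a * (z ^ q) ^ s)
    + c ^ q * (z ^ s * a ^ q + a ^ s * z ^ q) + d * (z ^ s * (a ^ q) ^ s + a ^ s * (z ^ q) ^ s)
    + (z ^ q) ^ s * a ^ q + (a ^ q) ^ s * z ^ q

-- `form c q s a = a ^ (s + 1) * P (a ^ (q - 1))` for Budaghyan–Carlet's
-- `P X = X ^ (s + 1) + c X ^ s + c ^ q X + 1`.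
def form (c : R) (q s : ℕ) (a : R) : R :=
  a * a ^ s + c * a * (a ^ q) ^ s + c ^ q * a ^ q * a ^ s + a ^ q * (a ^ q) ^ s

variable [CharP R 2] (c d : R) {m n : ℕ}

theorem hexanomial_add (x a : R) :
    hexanomial c d (2 ^ m) (2 ^ n) (x + a) =
      hexanomial c d (2 ^ m) (2 ^ n) x + hexanomial c d (2 ^ m) (2 ^ n) a
        + polar c d (2 ^ m) (2 ^ n) x a := by
  simp only [hexanomial, polar, add_mul (2 ^ n) 1, one_mul, pow_mul, pow_add, add_pow_char_pow]
  ring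

theorem polar_add_left (x y a : R) :
    polar c d (2 ^ m) (2 ^ n) (x + y) a =
      polar c d (2 ^ m) (2 ^ n) x a + polar c d (2 ^ m) (2 ^ n) y a := by
  simp only [polar, add_pow_char_pow]
  ring

theorem polar_mul_self {l : R} (hl : l ^ 2 ^ m = l) (a : R) :
    polar c d (2 ^ m) (2 ^ n) (l * a) a = (l ^ 2 ^ n + l) * form c (2 ^ m) (2 ^ n) a := by
  simp only [polar, form, mul_pow, hl]
  ring_nf
  reduce_mod_char!

theorem form_one_add_mul {γ δ : R} (hγ : γ ^ 2 ^ m = γ) (hδ : δ ^ 2 ^ m = δ + 1)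
    {a e w : R} (he : e = a + a ^ 2 ^ m) (hw : w = a ^ 2 ^ m + e * δ) :
    form (1 + γ * δ) (2 ^ m) (2 ^ n) a =
      γ * (w ^ 2 ^ n * w + (δ ^ 2 ^ n + δ + 1) * e ^ 2 ^ n * w + (δ ^ 2 + δ) * e ^ 2 ^ n * e)
        + e ^ 2 ^ n * e := by
  subst he hw
  simp only [form, add_pow_char_pow, mul_pow, one_pow, hγ, hδ]
  ring_nf
  reduce_mod_char!

end Identities

variable {K : Type*} [Field K] [Fintype K] [CharP K 2] {m n : ℕ}

theorem polar_add_polar_pow (c d : K) (hcard : Fintype.card K = 2 ^ (2 * m)) (z a : K) :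
    polar c d (2 ^ m) (2 ^ n) z a + polar c d (2 ^ m) (2 ^ n) z a ^ 2 ^ m =
      (d + d ^ 2 ^ m) * (z * a ^ 2 ^ m + a * z ^ 2 ^ m) ^ 2 ^ n := by
  simp only [polar, add_pow_char_pow, mul_pow, pow_pow_pow_pow_eq_self hcard,
    pow_right_comm _ (2 ^ n) (2 ^ m)]
  ring_nf
  reduce_mod_char!

theorem eq_zero_or_eq_of_polar_eq_zero {c d : K} (hcard : Fintype.card K = 2 ^ (2 * m))
    (hgcd : m.gcd n = 1) (hd : d ^ 2 ^ m ≠ d)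
    (hc : m = 1 ∨ ∀ a ≠ 0, form c (2 ^ m) (2 ^ n) a ≠ 0) {z a : K} (ha : a ≠ 0)
    (h : polar c d (2 ^ m) (2 ^ n) z a = 0) : z = 0 ∨ z = a := by
  have hza : z * a ^ 2 ^ m = a * z ^ 2 ^ m := by
    have key := polar_add_polar_pow c d (n := n) hcard z a
    rw [h, zero_pow (by positivity), add_zero, eq_comm, mul_eq_zero,
      or_iff_right (mt CharTwo.add_eq_zero.mp (Ne.symm hd)), pow_eq_zero_iff (by positivity)] at key
    exact CharTwo.add_eq_zero.mp key
  have hl : (z / a) ^ 2 ^ m = z / a := by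
    rw [div_pow, div_eq_div_iff (pow_ne_zero _ ha) ha, mul_comm, ← hza, mul_comm]
  have hl2 : (z / a) ^ 2 = z / a := by
    rcases hc with rfl | hc
    · simpa using hl
    · have key := polar_mul_self c d (n := n) hl a
      rw [div_mul_cancel₀ z ha, h, eq_comm, mul_eq_zero, or_iff_left (hc a ha)] at key
      simpa [hgcd] using pow_pow_gcd_eq_self hl (CharTwo.add_eq_zero.mp key)
  rcases eq_zero_or_one_of_sq_eq_self hl2 with h0 | h1
  · exact .inl (by simpa [ha] using h0)
  · exact .inr ((div_eq_one_iff_eq ha).mp h1)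

theorem ncard_setOf_hexanomial_add_add_eq_le_two {c d : K} (hcard : Fintype.card K = 2 ^ (2 * m))
    (hgcd : m.gcd n = 1) (hd : d ^ 2 ^ m ≠ d)
    (hc : m = 1 ∨ ∀ a ≠ 0, form c (2 ^ m) (2 ^ n) a ≠ 0) {a : K} (ha : a ≠ 0) (b : K) :
    {x | hexanomial c d (2 ^ m) (2 ^ n) (x + a) + hexanomial c d (2 ^ m) (2 ^ n) x = b}.ncard
      ≤ 2 := by
  let L : K →+ K :=
    AddMonoidHom.mk' (polar c d (2 ^ m) (2 ^ n) · a) (polar_add_left c d · · a)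
  have hL : ∀ x, hexanomial c d (2 ^ m) (2 ^ n) (x + a) + hexanomial c d (2 ^ m) (2 ^ n) x
      = L x + hexanomial c d (2 ^ m) (2 ^ n) a := fun x => by
    rw [hexanomial_add, AddMonoidHom.mk'_apply]
    linear_combination CharTwo.add_self_eq_zero (hexanomial c d (2 ^ m) (2 ^ n) x)
  simp_rw [hL, CharTwo.add_eq_iff_eq_add]
  exact L.ncard_setOf_eq_le_two
    (fun z hz => eq_zero_or_eq_of_polar_eq_zero hcard hgcd hd hc ha hz) _

theorem form_ne_zero_of_forall_ne (hcard : Fintype.card K = 2 ^ (2 * m)) {δ B : K}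
    (hδ : δ ^ 2 ^ m = δ + 1) (hB : B ^ 2 ^ m = B) (hBν : B ≠ δ ^ 2 + δ)
    (hBf : ∀ u, u ^ 2 ^ m = u → u ^ 2 ^ n * u + (δ ^ 2 ^ n + δ + 1) * u ≠ B) {a : K}
    (ha : a ≠ 0) : form (1 + (B + (δ ^ 2 + δ))⁻¹ * δ) (2 ^ m) (2 ^ n) a ≠ 0 := by
  have hγ : (B + (δ ^ 2 + δ))⁻¹ ^ 2 ^ m = (B + (δ ^ 2 + δ))⁻¹ := by
    rw [inv_pow, add_pow_char_pow, hB, add_pow_char_pow, pow_right_comm, hδ]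
    ring_nf
    reduce_mod_char!
  have hγB := inv_mul_cancel₀ (a := B + (δ ^ 2 + δ)) (mt CharTwo.add_eq_zero.mp hBν)
  generalize (B + (δ ^ 2 + δ))⁻¹ = γ at hγ hγB ⊢
  have hγ0 : γ ≠ 0 := left_ne_zero_of_mul_eq_one hγB
  have he : (a + a ^ 2 ^ m) ^ 2 ^ m = a + a ^ 2 ^ m := by
    rw [add_pow_char_pow, pow_pow_pow_pow_eq_self hcard, add_comm]
  have hw : (a ^ 2 ^ m + (a + a ^ 2 ^ m) * δ) ^ 2 ^ m = a ^ 2 ^ m + (a + a ^ 2 ^ m) * δ := by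
    rw [add_pow_char_pow, mul_pow, he, hδ, pow_pow_pow_pow_eq_self hcard]
    ring_nf
    reduce_mod_char!
  rw [form_one_add_mul hγ hδ rfl rfl]
  generalize a + a ^ 2 ^ m = e at he hw ⊢
  rcases eq_or_ne e 0 with rfl | he0
  · simp [hγ0, ha]
  generalize a ^ 2 ^ m + e * δ = w at hw ⊢
  obtain ⟨u, rfl⟩ : ∃ u, w = u * e := ⟨w / e, (div_mul_cancel₀ w he0).symm⟩
  have hu : u ^ 2 ^ m = u := mul_right_cancel₀ he0 (by rw [← hw, mul_pow, he])
  have key : γ * ((u * e) ^ 2 ^ n * (u * e) + (δ ^ 2 ^ n + δ + 1) * e ^ 2 ^ n * (u * e)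
      + (δ ^ 2 + δ) * e ^ 2 ^ n * e) + e ^ 2 ^ n * e
      = γ * e ^ 2 ^ n * e * (u ^ 2 ^ n * u + (δ ^ 2 ^ n + δ + 1) * u + B) := by
    rw [mul_pow]
    linear_combination (norm := ring_nf) (e ^ 2 ^ n * e) * hγB
    reduce_mod_char!
  rw [key]
  exact mul_ne_zero (by simp [hγ0, he0]) (mt CharTwo.add_eq_zero.mp (hBf u hu))

theorem card_image_add_two_le [DecidableEq K] (hm : 3 ≤ m)
    (hcard : Fintype.card K = 2 ^ (2 * m)) (hgcd : m.gcd n = 1) {A : K} (hA : A ^ 2 ^ m = A)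
    (hA0 : A ≠ 0) :
    #(({x | x ^ 2 ^ m = x} : Finset K).image fun w => w ^ 2 ^ n * w + A * w) + 2
      ≤ #({x | x ^ 2 ^ m = x} : Finset K) := by
  set S : Finset K := {x | x ^ 2 ^ m = x}
  have hS : ∀ {x}, x ∈ S ↔ x ^ 2 ^ m = x := by simp [S]
  obtain ⟨l, hl, hl0, hl1, hls⟩ := exists_pow_two_pow_eq_self_mul_ne_one hm hcard hgcd
  obtain ⟨w₀, hw₀, hw₀s⟩ := exists_pow_pow_eq_of_pow_pow_eq_self (by omega) hA n
  obtain ⟨z, hz, hz0, hfz⟩ := exists_collision_mul (by omega) hA hA0 hl hl1 hls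
  have hw₀0 : w₀ ≠ 0 := by rintro rfl; simp [hA0.symm] at hw₀s
  have hf₀ : (0 : K) ^ 2 ^ n * 0 + A * 0 = w₀ ^ 2 ^ n * w₀ + A * w₀ := by
    simp [hw₀s, CharTwo.add_self_eq_zero]
  have hzS : z ∈ S.erase 0 := mem_erase.mpr ⟨hz0, hS.mpr hz⟩
  have hlzS : l * z ∈ S.erase 0 :=
    mem_erase.mpr ⟨mul_ne_zero hl0 hz0, hS.mpr (by rw [mul_pow, hl, hz])⟩
  have hzlz : z ≠ l * z := fun h => hl1 (mul_right_cancel₀ hz0 (by rw [one_mul, ← h]))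
  rw [← image_erase_of_map_eq (hS.mpr hw₀) hw₀0.symm hf₀,
    ← image_erase_of_map_eq hlzS hzlz hfz]
  have hle := card_image_le (s := (S.erase 0).erase z) (f := fun w => w ^ 2 ^ n * w + A * w)
  rw [card_erase_of_mem hzS, card_erase_of_mem (hS.mpr (by simp))] at hle
  have h2 : 2 ≤ #S := by
    rw [card_filter_pow_pow_eq_self (by omega) hcard]
    exact Nat.le_self_pow (by omega) 2
  omega

theorem exists_ne_forall_ne_of_three_le (hm : 3 ≤ m) (hcard : Fintype.card K = 2 ^ (2 * m))
    (hgcd : m.gcd n = 1) {A : K} (hA : A ^ 2 ^ m = A) (hA0 : A ≠ 0) (ν : K) :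
    ∃ B : K, B ^ 2 ^ m = B ∧ B ≠ ν ∧
      ∀ w, w ^ 2 ^ m = w → w ^ 2 ^ n * w + A * w ≠ B := by
  classical
  have himage := card_image_add_two_le hm hcard hgcd hA hA0
  obtain ⟨B, hB, hBν⟩ := exists_mem_notMem_of_card_lt_card
    (s := insert ν (({x | x ^ 2 ^ m = x} : Finset K).image fun w => w ^ 2 ^ n * w + A * w))
    (t := {x | x ^ 2 ^ m = x})
    ((card_insert_le ν _).trans_lt (by omega))
  rw [mem_insert, not_or, mem_image, not_exists] at hBν
  exact ⟨B, (mem_filter.mp hB).2, hBν.1,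
    fun w hw h => hBν.2 w ⟨mem_filter.mpr ⟨mem_univ w, hw⟩, h⟩⟩

theorem exists_pow_two_pow_eq_add_one_and_ne_zero (hm : 2 ≤ m)
    (hcard : Fintype.card K = 2 ^ (2 * m)) (hgcd : m.gcd n = 1) :
    ∃ δ : K, δ ^ 2 ^ m = δ + 1 ∧ δ ^ 2 ^ n + δ + 1 ≠ 0 := by
  classical
  obtain ⟨δ, hδ⟩ := exists_pow_two_pow_eq_add_one (by omega) hcard
  by_cases hA : δ ^ 2 ^ n + δ + 1 = 0
  · obtain ⟨v, hv, hv2⟩ := exists_pow_pow_eq_self_notMem (t := {x : K | x ^ 2 = x}) (by omega)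
      hcard ((card_filter_pow_eq_self_le one_lt_two).trans_lt
        ((by norm_num : 2 < 2 ^ 2).trans_le (Nat.pow_le_pow_right two_pos hm)))
    have hvs : v ^ 2 ^ n ≠ v := fun h => hv2 (by simpa [hgcd] using pow_pow_gcd_eq_self hv h)
    refine ⟨δ + v, by rw [add_pow_char_pow, hδ, hv, add_right_comm], ?_⟩
    rw [add_pow_char_pow, add_add_add_comm, add_right_comm, hA, zero_add]
    exact mt CharTwo.add_eq_zero.mp hvs
  · exact ⟨δ, hδ, hA⟩

theorem exists_forall_form_ne_zero (hm : 2 ≤ m) (hcard : Fintype.card K = 2 ^ (2 * m))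
    (hgcd : m.gcd n = 1) : ∃ c : K, ∀ a ≠ 0, form c (2 ^ m) (2 ^ n) a ≠ 0 := by
  obtain ⟨δ, hδ, hA0⟩ := exists_pow_two_pow_eq_add_one_and_ne_zero hm hcard hgcd
  have hA : (δ ^ 2 ^ n + δ + 1) ^ 2 ^ m = δ ^ 2 ^ n + δ + 1 := by
    rw [add_pow_char_pow, add_pow_char_pow, pow_right_comm, hδ, add_pow_char_pow, one_pow]
    ring_nf
    reduce_mod_char!
  obtain ⟨B, hB, hBν, hBf⟩ : ∃ B : K, B ^ 2 ^ m = B ∧ B ≠ δ ^ 2 + δ ∧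
      ∀ w, w ^ 2 ^ m = w → w ^ 2 ^ n * w + (δ ^ 2 ^ n + δ + 1) * w ≠ B := by
    rcases hm.eq_or_lt with rfl | hm
    · -- On `𝔽_4` the map misses `1`, and `δ ^ 2 + δ = 1` would give `δ ^ 4 = δ`.
      refine ⟨1, one_pow _, fun h => ?_, fun w hw => pow_two_pow_mul_add_mul_ne_one
        (Nat.coprime_two_left.mp hgcd) hA0 hw⟩
      refine one_ne_zero (α := K) ?_
      linear_combination (norm := ring_nf) (δ ^ 2 - δ) * h - hδ
      reduce_mod_char!
    · exact exists_ne_forall_ne_of_three_le hm hcard hgcd hA hA0 _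
  exact ⟨_, fun a ha => form_ne_zero_of_forall_ne hcard hδ hB hBν hBf ha⟩

end BudaghyanCarlet

theorem stmt19_general (m n : ℕ) (hm : 1 ≤ m) (hgcd : Nat.gcd m n = 1)
    (K : Type) [Field K] [Fintype K] (hcard : Fintype.card K = 2 ^ (2 * m)) :
    ∃ c d : K, d ^ (2 ^ m) ≠ d ∧
      (let r := 2 ^ m; let s := 2 ^ n
       let F : K → K := fun x =>
         x * (x ^ s + x ^ r + c * x ^ (r * s)) + x ^ s * (c ^ r * x ^ r + d * x ^ (r * s))
           + x ^ ((s + 1) * r)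
       ∀ a : K, a ≠ 0 → ∀ b : K, {x : K | F (x + a) + F x = b}.ncard ≤ 2) := by
  have : CharP K 2 := charP_of_card_eq_prime_pow hcard
  obtain ⟨δ, hδ⟩ := exists_pow_two_pow_eq_add_one (by omega) hcard
  have hδ' : δ ^ 2 ^ m ≠ δ := by simp [hδ]
  obtain ⟨c, hc⟩ : ∃ c : K,
      m = 1 ∨ ∀ a ≠ 0, BudaghyanCarlet.form c (2 ^ m) (2 ^ n) a ≠ 0 := by
    rcases hm.eq_or_lt with h | h
    · exact ⟨0, .inl h.symm⟩
    · exact (BudaghyanCarlet.exists_forall_form_ne_zero h hcard hgcd).imp fun _ => .inr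
  exact ⟨c, δ, hδ', fun a ha b =>
    BudaghyanCarlet.ncard_setOf_hexanomial_add_add_eq_le_two hcard hgcd hδ' hc ha b⟩

/-- Corollary: if `gcd(m,n) = 1`, there exist `c ∈ F_{r^2}` and `d ∈ F_{r^2} \ F_r` such
that `F` is APN on `F_{r^2}`. -/
theorem stmt19 (m n : ℕ) (hm : 1 ≤ m) (hn : 1 ≤ n) (hgcd : Nat.gcd m n = 1)
    (K : Type) [Field K] [Fintype K] (hcard : Fintype.card K = 2 ^ (2 * m)) :
    ∃ c d : K, d ^ (2 ^ m) ≠ d ∧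
      (let r := 2 ^ m; let s := 2 ^ n
       let F : K → K := fun x =>
         x * (x ^ s + x ^ r + c * x ^ (r * s)) + x ^ s * (c ^ r * x ^ r + d * x ^ (r * s))
           + x ^ ((s + 1) * r)
       ∀ a : K, a ≠ 0 → ∀ b : K, {x : K | F (x + a) + F x = b}.ncard ≤ 2) :=
  stmt19_general m n hm hgcd K hcard
end
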